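/- arXiv:2004.02293 — 3 statements merged into one kernel-verified Lean document; each statement's English description precedes it below -/
import Mathlib

section
/- In a compact topometric space (X, 𝒯, d), the metric d is automatically complete. -/
/-- In a compact topometric space `(X, 𝒯, d)` — i.e., the topology induced by
the metric `d` refines `𝒯`, the metric is `𝒯 × 𝒯`-lower semicontinuous, and
`𝒯` is compact — the metric `d` is automatically complete. -/
theorem stmt_5 {X : Type*} [MetricSpace X] (T : TopologicalSpace X)
    (hrefine : ∀ s : Set X, @IsOpen X T s → IsOpen s)
    (hlsc : @LowerSemicontinuous (X × X) ℝ (@instTopologicalSpaceProd X X T T) _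
      (fun p => dist p.1 p.2))
    (hcompact : @CompactSpace X T) :
    CompleteSpace X := by
  apply Metric.complete_of_cauchySeq_tendsto
  intro u hu
  obtain ⟨x, hx⟩ := @exists_clusterPt_of_compactSpace X T hcompact
    (Filter.map u Filter.atTop) inferInstance
  refine ⟨x, ?_⟩
  rw [Metric.tendsto_atTop]
  intro ε hε
  obtain ⟨N, hN⟩ := Metric.cauchySeq_iff.mp hu (ε / 2) (by linarith)
  refine ⟨N, fun n hn => ?_⟩
  have key : dist (u n) x ≤ ε / 2 := by
    by_contra h
    push_neg at h
    have hlscat := hlsc (u n, x) (ε / 2) h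
    rw [@nhds_prod_eq X X T T] at hlscat
    obtain ⟨s, hs, t, ht, hst⟩ := Filter.mem_prod_iff.mp hlscat
    have hself : u n ∈ s := mem_of_mem_nhds hs
    have hfreq : ∃ᶠ m in Filter.atTop, u m ∈ t :=
      (@mapClusterPt_iff_frequently X T ℕ Filter.atTop u x).mp hx t ht
    obtain ⟨m, hmN, hmt⟩ := (hfreq.and_eventually (Filter.eventually_ge_atTop N)).exists
    have : ε / 2 < dist (u n) (u m) := hst (Set.mk_mem_prod hself hmN)
    exact absurd (hN n hn m hmt) (by linarith)
  linarith
end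

section
/- Let M be a von Neumann algebra with faithful normal trace τ, and let 𝒰 be a nonprincipal ultrafilter on ℕ. For countable tuples a = (a_j), b = (b_j) in the unit ball of M^𝒰, define ‖a − b‖₁ = Σ_j 2^{−j} ‖a_j − b_j‖₂. Then the orbit of any countable tuple a under the action of the automorphism group Aut(M^𝒰) is closed with respect to ‖·‖₁. -/
noncomputable section

/-- An abstract tracial state on a complex normed star algebra: the data of a
tracial von Neumann algebra `(M, τ)`. -/
structure TraceData (M : Type*) [NormedRing M] [StarRing M] [Algebra ℂ M] where
  τ : M → ℂ
  map_add : ∀ x y, τ (x + y) = τ x + τ y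
  map_smul : ∀ (c : ℂ) (x : M), τ (c • x) = c * τ x
  map_one : τ 1 = 1
  map_star : ∀ x, τ (star x) = starRingEnd ℂ (τ x)
  tracial : ∀ x y, τ (x * y) = τ (y * x)
  re_nonneg : ∀ x, 0 ≤ (τ (star x * x)).re
  im_eq_zero : ∀ x, (τ (star x * x)).im = 0
  faithful : ∀ x, τ (star x * x) = 0 → x = 0
  bounded : ∀ x, ‖τ x‖ ≤ ‖x‖

namespace TraceData

variable {M : Type*} [NormedRing M] [StarRing M] [Algebra ℂ M]

/-- The Hilbert–Schmidt (2-)norm associated to a trace. -/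
def norm2 (T : TraceData M) (x : M) : ℝ := Real.sqrt (T.τ (star x * x)).re

end TraceData

/-- `*`-polynomials in `n` noncommuting variables (the second copy of `Fin n`
stands for the formal adjoints of the variables). -/
abbrev StarPoly (n : ℕ) := FreeAlgebra ℂ (Fin n ⊕ Fin n)

/-- Evaluation of a `*`-polynomial at a tuple of elements. -/
def StarPoly.evalAt {M : Type*} [Ring M] [Algebra ℂ M] [StarRing M] {n : ℕ}
    (p : StarPoly n) (v : Fin n → M) : M :=
  (FreeAlgebra.lift ℂ (Sum.elim v fun i => star (v i))) p

/-- Formulas of the continuous first-order language of tracial von Neumann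
algebras: atomic formulas are real and imaginary parts of traces of
`*`-polynomials; formulas are closed under continuous combinations and the
quantifiers `sup` and `inf` (binding the last variable, ranging over the
operator-norm unit ball). -/
inductive Formula : ℕ → Type
  | re {n : ℕ} (p : StarPoly n) : Formula n
  | im {n : ℕ} (p : StarPoly n) : Formula n
  | comb {n k : ℕ} (f : (Fin k → ℝ) → ℝ) (hf : Continuous f) (φ : Fin k → Formula n) :
      Formula n
  | sup {n : ℕ} (φ : Formula (n + 1)) : Formula n
  | inf {n : ℕ} (φ : Formula (n + 1)) : Formula n

/-- Evaluation of a formula in a tracial von Neumann algebra, with quantifiers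
relativized to the elements of a subset `S` of operator norm at most 1. -/
def Formula.evalIn {M : Type*} [NormedRing M] [StarRing M] [Algebra ℂ M]
    (T : TraceData M) (S : Set M) : {n : ℕ} → Formula n → (Fin n → M) → ℝ
  | _, .re p, v => (T.τ (p.evalAt v)).re
  | _, .im p, v => (T.τ (p.evalAt v)).im
  | _, .comb f _ φ, v => f fun i => (φ i).evalIn T S v
  | _, .sup φ, v => ⨆ x : {y : M // y ∈ S ∧ ‖y‖ ≤ 1}, φ.evalIn T S (Fin.snoc v x.1)
  | _, .inf φ, v => ⨅ x : {y : M // y ∈ S ∧ ‖y‖ ≤ 1}, φ.evalIn T S (Fin.snoc v x.1)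

/-- Evaluation of a formula in a tracial von Neumann algebra (quantifiers range
over the operator-norm unit ball). -/
def Formula.eval {M : Type*} [NormedRing M] [StarRing M] [Algebra ℂ M]
    (T : TraceData M) {n : ℕ} (φ : Formula n) (v : Fin n → M) : ℝ :=
  φ.evalIn T Set.univ v

/-- Quantifier-free formulas. -/
def Formula.IsQF : {n : ℕ} → Formula n → Prop
  | _, .re _ => True
  | _, .im _ => True
  | _, .comb _ _ φ => ∀ i, (φ i).IsQF
  | _, .sup _ => False
  | _, .inf _ => False

/-- Formulas of the form `sup_y ... sup_y' ψ` with `ψ` quantifier-free. -/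
def Formula.IsSupQF : {n : ℕ} → Formula n → Prop
  | _, .sup φ => φ.IsSupQF
  | _, φ => φ.IsQF

/-- Existential formulas: `inf_x ... inf_x' ψ` with `ψ` quantifier-free. -/
def Formula.IsExistential : {n : ℕ} → Formula n → Prop
  | _, .inf φ => φ.IsExistential
  | _, φ => φ.IsQF

/-- `∃₂`-formulas: `inf_x ... sup_y ... ψ` with `ψ` quantifier-free. -/
def Formula.IsInfSupQF : {n : ℕ} → Formula n → Prop
  | _, .inf φ => φ.IsInfSupQF
  | _, φ => φ.IsSupQF

/-- Bounded sequences in a normed algebra, i.e. elements of `ℓ^∞(M)`. -/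
def BddSeq (M : Type*) [NormedRing M] : Type _ :=
  {x : ℕ → M // ∃ C : ℝ, ∀ k, ‖x k‖ ≤ C}

namespace BddSeq

variable {M : Type*} [NormedRing M] [StarRing M] [NormedStarGroup M]

instance : Add (BddSeq M) :=
  ⟨fun x y => ⟨fun k => x.1 k + y.1 k, by
    obtain ⟨C, hC⟩ := x.2; obtain ⟨D, hD⟩ := y.2
    exact ⟨C + D, fun k => (norm_add_le _ _).trans (add_le_add (hC k) (hD k))⟩⟩⟩

instance : Neg (BddSeq M) :=
  ⟨fun x => ⟨fun k => -(x.1 k), by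
    obtain ⟨C, hC⟩ := x.2
    exact ⟨C, fun k => by rw [norm_neg]; exact hC k⟩⟩⟩

instance : Sub (BddSeq M) := ⟨fun x y => x + -y⟩

instance : Mul (BddSeq M) :=
  ⟨fun x y => ⟨fun k => x.1 k * y.1 k, by
    obtain ⟨C, hC⟩ := x.2; obtain ⟨D, hD⟩ := y.2
    refine ⟨max C 0 * max D 0, fun k => (norm_mul_le _ _).trans ?_⟩
    exact mul_le_mul ((hC k).trans (le_max_left _ _)) ((hD k).trans (le_max_left _ _))
      (norm_nonneg _) (le_max_right _ _)⟩⟩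

instance : One (BddSeq M) := ⟨⟨fun _ => 1, ⟨‖(1 : M)‖, fun _ => le_rfl⟩⟩⟩

instance : Star (BddSeq M) :=
  ⟨fun x => ⟨fun k => star (x.1 k), by
    obtain ⟨C, hC⟩ := x.2
    exact ⟨C, fun k => by rw [norm_star]; exact hC k⟩⟩⟩

end BddSeq

/-- The constant sequence. -/
def constSeq {M : Type*} [NormedRing M] (x : M) : BddSeq M :=
  ⟨fun _ => x, ‖x‖, fun _ => le_rfl⟩

/-- `π : ℓ^∞(M) → Q` exhibits `(Q, T_Q)` as the tracial ultrapower `M^𝒰` of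
`(M, T_M)` with respect to the ultrafilter `𝒰`. -/
structure IsTracialUltrapower (𝒰 : Ultrafilter ℕ) {M Q : Type*}
    [NormedRing M] [StarRing M] [Algebra ℂ M] [NormedStarGroup M]
    [NormedRing Q] [StarRing Q] [Algebra ℂ Q]
    (TM : TraceData M) (TQ : TraceData Q) (π : BddSeq M → Q) : Prop where
  surjective : Function.Surjective π
  map_one : π 1 = 1
  map_add : ∀ x y, π (x + y) = π x + π y
  map_mul : ∀ x y, π (x * y) = π x * π y
  map_star : ∀ x, π (star x) = star (π x)
  map_algebraMap : ∀ c : ℂ, π (constSeq (algebraMap ℂ M c)) = algebraMap ℂ Q c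
  eq_iff : ∀ x y, π x = π y ↔
      Filter.Tendsto (fun k => TM.norm2 (x.1 k - y.1 k)) (𝒰 : Filter ℕ) (nhds 0)
  trace : ∀ x, Filter.Tendsto (fun k => TM.τ (x.1 k)) (𝒰 : Filter ℕ) (nhds (TQ.τ (π x)))
  norm_le : ∀ (x : BddSeq M) (r : ℝ),
      Filter.Tendsto (fun k => ‖x.1 k‖) (𝒰 : Filter ℕ) (nhds r) → ‖π x‖ ≤ r
  los : ∀ (n : ℕ) (φ : Formula n) (x : Fin n → BddSeq M),
      Filter.Tendsto (fun k => φ.eval TM fun i => (x i).1 k) (𝒰 : Filter ℕ)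
        (nhds (φ.eval TQ fun i => π (x i)))

/-- A (trace-preserving, isometric) embedding of tracial von Neumann algebras. -/
structure TraceEmbedding {N M : Type*} [NormedRing N] [StarRing N] [Algebra ℂ N]
    [NormedRing M] [StarRing M] [Algebra ℂ M]
    (TN : TraceData N) (TM : TraceData M) where
  toHom : N →⋆ₐ[ℂ] M
  isometric : ∀ x, ‖toHom x‖ = ‖x‖
  trace_eq : ∀ x, TM.τ (toHom x) = TN.τ x

/-- A (trace-preserving, isometric) automorphism of a tracial von Neumann
algebra. -/
structure TraceAut {M : Type*} [NormedRing M] [StarRing M] [Algebra ℂ M]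
    (T : TraceData M) where
  toEquiv : M ≃⋆ₐ[ℂ] M
  isometric : ∀ x, ‖toEquiv x‖ = ‖x‖
  trace_eq : ∀ x, T.τ (toEquiv x) = T.τ x

section Defs

variable {N M : Type*} [NormedRing N] [StarRing N] [Algebra ℂ N]
  [NormedRing M] [StarRing M] [Algebra ℂ M]

/-- An embedding is elementary if it preserves the values of all formulas. -/
def TraceEmbedding.Elementary {TN : TraceData N} {TM : TraceData M}
    (f : TraceEmbedding TN TM) : Prop :=
  ∀ (n : ℕ) (φ : Formula n) (v : Fin n → N),
    φ.eval TM (fun i => f.toHom (v i)) = φ.eval TN v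

/-- An embedding is existential if it preserves the values of all existential
formulas. -/
def TraceEmbedding.Existential {TN : TraceData N} {TM : TraceData M}
    (f : TraceEmbedding TN TM) : Prop :=
  ∀ (n : ℕ) (φ : Formula n), φ.IsExistential → ∀ v : Fin n → N,
    φ.eval TM (fun i => f.toHom (v i)) = φ.eval TN v

/-- An embedding is downward `∃₂` if every nonnegative `∃₂`-formula with
parameters in the domain whose value is `0` in the codomain has value `0`
in the domain. -/
def TraceEmbedding.DownwardE2 {TN : TraceData N} {TM : TraceData M}
    (f : TraceEmbedding TN TM) : Prop :=
  ∀ (n : ℕ) (φ : Formula n), φ.IsInfSupQF →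
    (∀ v : Fin n → N, 0 ≤ φ.eval TN v) → (∀ v : Fin n → M, 0 ≤ φ.eval TM v) →
    ∀ a : Fin n → N, φ.eval TM (fun i => f.toHom (a i)) = 0 → φ.eval TN a = 0

/-- The center of `M` is trivial. -/
def IsFactorAlg (M : Type*) [NormedRing M] [StarRing M] [Algebra ℂ M] : Prop :=
  ∀ x : M, (∀ y : M, x * y = y * x) → ∃ c : ℂ, x = algebraMap ℂ M c

/-- The relative commutant of a subset. -/
def RelComm {M : Type*} [Mul M] (S : Set M) : Set M :=
  {x : M | ∀ s ∈ S, x * s = s * x}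

/-- A subset (e.g. a relative commutant) is a factor: its relative center is
trivial. -/
def IsFactorSet {M : Type*} [NormedRing M] [StarRing M] [Algebra ℂ M] (S : Set M) : Prop :=
  ∀ x ∈ S, (∀ y ∈ S, x * y = y * x) → ∃ c : ℂ, x = algebraMap ℂ M c

/-- `(M, τ)` is separable with respect to the 2-norm. -/
def Separable2 {M : Type*} [NormedRing M] [StarRing M] [Algebra ℂ M]
    (T : TraceData M) : Prop :=
  ∃ S : Set M, S.Countable ∧ ∀ x : M, ∀ ε : ℝ, 0 < ε → ∃ y ∈ S, T.norm2 (x - y) < ε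

/-- A subset of `(M, τ)` is separable with respect to the 2-norm. -/
def SeparableIn {M : Type*} [NormedRing M] [StarRing M] [Algebra ℂ M]
    (T : TraceData M) (A : Set M) : Prop :=
  ∃ S : Set M, S ⊆ A ∧ S.Countable ∧
    ∀ x ∈ A, ∀ ε : ℝ, 0 < ε → ∃ y ∈ S, T.norm2 (x - y) < ε

/-- Separable (countable) saturation: every countable collection of conditions
with parameters which is approximately finitely satisfiable in the unit ball is
satisfiable. -/
def SeparablySaturated {M : Type*} [NormedRing M] [StarRing M] [Algebra ℂ M]
    (T : TraceData M) : Prop :=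
  ∀ (nn : ℕ → ℕ) (φ : ∀ i : ℕ, Formula (nn i + 1)) (p : ∀ i : ℕ, Fin (nn i) → M),
    (∀ (F : Finset ℕ) (ε : ℝ), 0 < ε →
      ∃ a : M, ‖a‖ ≤ 1 ∧ ∀ i ∈ F, (φ i).eval T (Fin.snoc (p i) a) ≤ ε) →
    ∃ a : M, ‖a‖ ≤ 1 ∧ ∀ i : ℕ, (φ i).eval T (Fin.snoc (p i) a) ≤ 0

/-- Two countable tuples have the same type (over `∅`). -/
def SameType {M : Type*} [NormedRing M] [StarRing M] [Algebra ℂ M]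
    (T : TraceData M) (a b : ℕ → M) : Prop :=
  ∀ (n : ℕ) (φ : Formula n) (s : Fin n → ℕ), φ.eval T (a ∘ s) = φ.eval T (b ∘ s)

/-- Countable homogeneity: any two countable tuples from the unit ball with the
same type are conjugate by an automorphism. -/
def CountablyHomogeneous {M : Type*} [NormedRing M] [StarRing M] [Algebra ℂ M]
    (T : TraceData M) : Prop :=
  ∀ a b : ℕ → M, (∀ j, ‖a j‖ ≤ 1) → (∀ j, ‖b j‖ ≤ 1) → SameType T a b →
    ∃ α : TraceAut T, ∀ j, α.toEquiv (a j) = b j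

end Defs



section AUX

namespace TraceData

variable {M : Type*} [NormedRing M] [StarRing M] [Algebra ℂ M]

/-- purely real quadratic lemma used for Cauchy–Schwarz -/
theorem quad_aux (A B c : ℝ) (hA : 0 ≤ A) (hB : 0 ≤ B)
    (h : ∀ n m : ℕ, 0 ≤ (n:ℝ)^2 * A^2 + 2*(n:ℝ)*(m:ℝ)*c + (m:ℝ)^2 * B^2) :
    -(A*B) ≤ c := by
  by_contra hcon
  push_neg at hcon
  have hcneg : 0 < -c := by nlinarith [mul_nonneg hA hB]
  rcases eq_or_lt_of_le hA with hA0 | hA0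
  · -- A = 0
    obtain ⟨n, hn⟩ := exists_nat_gt (B^2 / (2 * (-c)))
    have h1 := h n 1
    rw [← hA0] at h1
    have : B^2 / (2*(-c)) < n := hn
    have h2 : B^2 < (n:ℝ) * (2*(-c)) := by
      rw [div_lt_iff₀ (by positivity)] at this; linarith
    push_cast at h1
    nlinarith
  · -- A > 0
    set g : ℝ → ℝ := fun t => t^2*A^2 + 2*t*c + B^2 with hg
    set t₀ : ℝ := (-c)/A^2 with ht₀
    have ht₀pos : 0 < t₀ := by positivity
    have hgt₀ : g t₀ < 0 := by
      have heq : g t₀ = B^2 - c^2/A^2 := by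
        field_simp [hg, ht₀]
        simp only [hg, ht₀]
        field_simp
        ring
      rw [heq, sub_neg, lt_div_iff₀ (by positivity : (0:ℝ) < A^2)]
      have h2 : 0 ≤ A*B := mul_nonneg hA hB
      have h3 : A*B < -c := by linarith
      nlinarith [mul_self_lt_mul_self h2 h3]
    have hcont : Continuous g := by fun_prop
    have hmem : {t : ℝ | g t < 0} ∈ nhds t₀ :=
      hcont.continuousAt.preimage_mem_nhds (Iio_mem_nhds hgt₀)
    obtain ⟨δ, hδpos, hδ⟩ := Metric.mem_nhds_iff.mp hmem
    obtain ⟨q, hq⟩ := exists_rat_near t₀ (lt_min_iff.mpr ⟨hδpos, ht₀pos⟩ : (0:ℝ) < min δ t₀)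
    have hqδ : |t₀ - (q:ℝ)| < δ := lt_of_lt_of_le hq (min_le_left _ _)
    have hqt : |t₀ - (q:ℝ)| < t₀ := lt_of_lt_of_le hq (min_le_right _ _)
    have hqpos : 0 < (q:ℝ) := by
      rcases abs_lt.mp hqt with ⟨h1, h2⟩; linarith
    have hgq : g q < 0 := by
      apply hδ
      rw [Metric.mem_ball, Real.dist_eq, abs_sub_comm]
      exact hqδ
    -- convert q to n/m
    set n : ℕ := q.num.toNat with hn
    set m : ℕ := q.den with hm
    have hmpos : 0 < (m:ℝ) := by exact_mod_cast q.pos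
    have hnum : ((n:ℝ)) = (q.num : ℝ) := by
      have : 0 ≤ q.num := by
        have := hqpos
        exact_mod_cast (Rat.num_nonneg).mpr (le_of_lt (by exact_mod_cast hqpos))
      exact_mod_cast Int.toNat_of_nonneg this
    have hq_eq : (q:ℝ) = (n:ℝ) / (m:ℝ) := by
      rw [hnum]
      rw [Rat.cast_def]
    have hmain := h n m
    have hexp : (n:ℝ)^2 * A^2 + 2*(n:ℝ)*(m:ℝ)*c + (m:ℝ)^2 * B^2 = (m:ℝ)^2 * g q := by
      rw [hg]
      simp only []
      rw [hq_eq]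
      field_simp
    rw [hexp] at hmain
    have : (m:ℝ)^2 * g q < 0 := mul_neg_of_pos_of_neg (by positivity) hgq
    linarith
  
variable (T : TraceData M)

theorem tau_zero : T.τ 0 = 0 := by
  have := T.map_add 0 0
  simpa using this.symm

theorem tau_neg (x : M) : T.τ (-x) = - T.τ x := by
  have h : (-x) = ((-1 : ℂ) • x) := by simp
  rw [h, T.map_smul]; ring

theorem tau_sub (x y : M) : T.τ (x - y) = T.τ x - T.τ y := by
  rw [sub_eq_add_neg, T.map_add, T.tau_neg, sub_eq_add_neg]

theorem norm2_nonneg (x : M) : 0 ≤ T.norm2 x := Real.sqrt_nonneg _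

theorem norm2_sq (x : M) : T.norm2 x ^ 2 = (T.τ (star x * x)).re := by
  rw [norm2, Real.sq_sqrt (T.re_nonneg x)]

theorem norm2_zero : T.norm2 0 = 0 := by
  simp [norm2, T.tau_zero]

theorem norm2_star (x : M) : T.norm2 (star x) = T.norm2 x := by
  unfold norm2
  rw [star_star, T.tracial]

theorem norm2_neg (x : M) : T.norm2 (-x) = T.norm2 x := by
  unfold norm2
  rw [star_neg, neg_mul_neg]

theorem tau_conj_symm (x y : M) :
    T.τ (star y * x) = starRingEnd ℂ (T.τ (star x * y)) := by
  rw [← T.map_star (star x * y), star_mul, star_star]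

theorem tau_natCast_mul (n : ℕ) (w : M) : T.τ ((n : M) * w) = (n : ℂ) * T.τ w := by
  have h1 : ((n : M)) = algebraMap ℂ M (n : ℂ) := by
    rw [map_natCast]
  rw [h1, ← Algebra.smul_def, T.map_smul]

theorem tau_mul_natCast (n : ℕ) (w : M) : T.τ (w * (n : M)) = (n : ℂ) * T.τ w := by
  rw [T.tracial, tau_natCast_mul]

/-- Real Cauchy–Schwarz for the trace inner product. -/
theorem re_cs (x y : M) :
    |(T.τ (star x * y)).re| ≤ T.norm2 x * T.norm2 y := by
  -- reduce to one-sided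
  have onesided : ∀ z w : M, -(T.norm2 z * T.norm2 w) ≤ (T.τ (star z * w)).re := by
    intro z w
    apply quad_aux _ _ _ (T.norm2_nonneg z) (T.norm2_nonneg w)
    intro n m
    set u : M := (n : M) * z + (m : M) * w with hu
    have hstar : star u = star z * (n : M) + star w * (m : M) := by
      rw [hu, star_add, star_mul, star_mul, star_natCast, star_natCast]
    have hexp : T.τ (star u * u) =
        ((n:ℂ)^2) * T.τ (star z * z)
        + ((n:ℂ)*(m:ℂ)) * (T.τ (star z * w) + T.τ (star w * z))
        + ((m:ℂ)^2) * T.τ (star w * w) := by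
      rw [hstar, hu]
      rw [add_mul, mul_add, mul_add]
      rw [T.map_add, T.map_add, T.map_add]
      have e1 : ∀ (a b : M) (k l : ℕ), T.τ ((a * (k:M)) * ((l:M) * b)) = ((k:ℂ)*(l:ℂ)) * T.τ (a * b) := by
        intro a b k l
        calc T.τ ((a * (k:M)) * ((l:M) * b)) = T.τ (a * ((k:M) * ((l:M) * b))) := by
              rw [mul_assoc]
          _ = T.τ (a * (((k*l : ℕ):M) * b)) := by rw [← mul_assoc (k:M)]; norm_cast
          _ = T.τ ((((k*l : ℕ):M) * b) * a) := T.tracial _ _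
          _ = T.τ (((k*l : ℕ):M) * (b * a)) := by rw [mul_assoc]
          _ = ((k*l:ℕ):ℂ) * T.τ (b * a) := T.tau_natCast_mul _ _
          _ = ((k:ℂ)*(l:ℂ)) * T.τ (a * b) := by rw [T.tracial]; push_cast; ring
      rw [e1, e1, e1, e1]
      ring
    have hre := T.re_nonneg u
    rw [hexp] at hre
    have hconj : T.τ (star w * z) = starRingEnd ℂ (T.τ (star z * w)) := T.tau_conj_symm z w
    rw [hconj] at hre
    rw [Complex.add_conj] at hre
    simp only [pow_two, Complex.add_re, Complex.mul_re, Complex.mul_im,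
      Complex.natCast_re, Complex.natCast_im, Complex.ofReal_re, Complex.ofReal_im,
      mul_zero, zero_mul, sub_zero, zero_add, add_zero, zero_sub, neg_zero] at hre
    rw [T.norm2_sq, T.norm2_sq]
    nlinarith [hre]
  rw [abs_le]
  constructor
  · have := onesided x y
    linarith
  · have h1 := onesided x (-y)
    have h2 : T.τ (star x * (-y)) = - T.τ (star x * y) := by
      rw [mul_neg, T.tau_neg]
    rw [h2] at h1
    rw [T.norm2_neg] at h1
    simp at h1
    linarith

theorem norm2_add_le (x y : M) : T.norm2 (x + y) ≤ T.norm2 x + T.norm2 y := by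
  have hexp : (T.τ (star (x+y) * (x+y))).re
      = T.norm2 x ^2 + 2 * (T.τ (star x * y)).re + T.norm2 y ^2 := by
    rw [star_add, add_mul, mul_add, mul_add]
    rw [T.map_add, T.map_add, T.map_add]
    have hconj : T.τ (star y * x) = starRingEnd ℂ (T.τ (star x * y)) := T.tau_conj_symm x y
    rw [T.norm2_sq, T.norm2_sq]
    simp only [Complex.add_re]
    rw [hconj]
    rw [Complex.conj_re]
    ring
  have hcs := T.re_cs x y
  have h1 : (T.τ (star (x+y) * (x+y))).re ≤ (T.norm2 x + T.norm2 y)^2 := by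
    rw [hexp]
    have := abs_le.mp hcs
    nlinarith
  rw [norm2]
  calc Real.sqrt (T.τ (star (x+y) * (x+y))).re ≤ Real.sqrt ((T.norm2 x + T.norm2 y)^2) :=
        Real.sqrt_le_sqrt h1
    _ = T.norm2 x + T.norm2 y := Real.sqrt_sq
        (by have := T.norm2_nonneg x; have := T.norm2_nonneg y; linarith)

theorem norm2_sub_le (x y : M) : T.norm2 (x - y) ≤ T.norm2 x + T.norm2 y := by
  rw [sub_eq_add_neg]
  calc T.norm2 (x + -y) ≤ T.norm2 x + T.norm2 (-y) := T.norm2_add_le x (-y)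
    _ = T.norm2 x + T.norm2 y := by rw [T.norm2_neg]

end TraceData

section NSG
variable {M : Type*} [NormedRing M] [StarRing M] [Algebra ℂ M] [NormedStarGroup M]

theorem TraceData.norm2_le_norm (T : TraceData M) (x : M) : T.norm2 x ≤ ‖x‖ := by
  rw [TraceData.norm2]
  have h1 : (T.τ (star x * x)).re ≤ ‖T.τ (star x * x)‖ := by
    exact Complex.re_le_norm _
  have h2 : ‖T.τ (star x * x)‖ ≤ ‖star x * x‖ := T.bounded _
  have h3 : ‖star x * x‖ ≤ ‖star x‖ * ‖x‖ := norm_mul_le _ _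
  rw [norm_star] at h3
  calc Real.sqrt (T.τ (star x * x)).re ≤ Real.sqrt (‖x‖ * ‖x‖) :=
        Real.sqrt_le_sqrt (by linarith)
    _ = ‖x‖ := Real.sqrt_mul_self (norm_nonneg x)

end NSG


namespace StarPoly

variable {M : Type*} [Ring M] [Algebra ℂ M] [StarRing M] {n : ℕ}

theorem evalAt_add (p q : StarPoly n) (v : Fin n → M) :
    (p + q).evalAt v = p.evalAt v + q.evalAt v := map_add _ _ _

theorem evalAt_mul (p q : StarPoly n) (v : Fin n → M) :
    (p * q).evalAt v = p.evalAt v * q.evalAt v := map_mul _ _ _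

theorem evalAt_sub (p q : StarPoly n) (v : Fin n → M) :
    (p - q).evalAt v = p.evalAt v - q.evalAt v := map_sub _ _ _

theorem evalAt_smul (c : ℂ) (p : StarPoly n) (v : Fin n → M) :
    (c • p).evalAt v = c • p.evalAt v := map_smul _ _ _

theorem evalAt_algebraMap (c : ℂ) (v : Fin n → M) :
    (algebraMap ℂ (StarPoly n) c).evalAt v = algebraMap ℂ M c :=
  AlgHom.commutes _ _

theorem evalAt_ι_inl (i : Fin n) (v : Fin n → M) :
    StarPoly.evalAt (FreeAlgebra.ι ℂ (Sum.inl i : Fin n ⊕ Fin n)) v = v i := by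
  simp only [StarPoly.evalAt, FreeAlgebra.lift_ι_apply]
  rfl

theorem evalAt_ι_inr (i : Fin n) (v : Fin n → M) :
    StarPoly.evalAt (FreeAlgebra.ι ℂ (Sum.inr i : Fin n ⊕ Fin n)) v = star (v i) := by
  simp only [StarPoly.evalAt, FreeAlgebra.lift_ι_apply]
  rfl

end StarPoly

section MBounds

variable {M : Type*} [NormedRing M] [StarRing M] [Algebra ℂ M] [NormedStarGroup M]

/-- Operator-norm bound for star-polynomial evaluation at unit tuples. -/
theorem opBound {n : ℕ} (p : StarPoly n) :
    ∃ C : ℝ, 0 ≤ C ∧ ∀ v : Fin n → M, (∀ i, ‖v i‖ ≤ 1) → ‖p.evalAt v‖ ≤ C := by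
  induction p using FreeAlgebra.induction with
  | grade0 r =>
      exact ⟨‖algebraMap ℂ M r‖, norm_nonneg _, fun v _ =>
        le_of_eq (by rw [StarPoly.evalAt_algebraMap])⟩
  | grade1 g =>
      refine ⟨1, zero_le_one, fun v hv => ?_⟩
      rcases g with i | i
      · rw [StarPoly.evalAt_ι_inl]; exact hv i
      · rw [StarPoly.evalAt_ι_inr, norm_star]; exact hv i
  | mul a b ha hb =>
      obtain ⟨C, hC0, hC⟩ := ha
      obtain ⟨D, hD0, hD⟩ := hb
      refine ⟨C * D, mul_nonneg hC0 hD0, fun v hv => ?_⟩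
      rw [StarPoly.evalAt_mul]
      calc ‖StarPoly.evalAt a v * StarPoly.evalAt b v‖
          ≤ ‖StarPoly.evalAt a v‖ * ‖StarPoly.evalAt b v‖ := norm_mul_le _ _
        _ ≤ C * D := mul_le_mul (hC v hv) (hD v hv) (norm_nonneg _) hC0
  | add a b ha hb =>
      obtain ⟨C, hC0, hC⟩ := ha
      obtain ⟨D, hD0, hD⟩ := hb
      refine ⟨C + D, add_nonneg hC0 hD0, fun v hv => ?_⟩
      rw [StarPoly.evalAt_add]
      calc ‖StarPoly.evalAt a v + StarPoly.evalAt b v‖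
          ≤ ‖StarPoly.evalAt a v‖ + ‖StarPoly.evalAt b v‖ := norm_add_le _ _
        _ ≤ C + D := add_le_add (hC v hv) (hD v hv)

/-- The 2-norm Lipschitz bound for traces of star-polynomials, with multiplier
slots, in a normed star algebra. -/
theorem lipBound (T : TraceData M) {n : ℕ} (p : StarPoly n) :
    ∃ C : ℝ, 0 ≤ C ∧ ∀ v v' : Fin n → M, (∀ i, ‖v i‖ ≤ 1) → (∀ i, ‖v' i‖ ≤ 1) →
      ∀ x y : M, |(T.τ (x * (p.evalAt v - p.evalAt v') * y)).re|
        ≤ C * (‖x‖ * ‖y‖) * ∑ i, T.norm2 (v i - v' i) := by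
  induction p using FreeAlgebra.induction with
  | grade0 r =>
      refine ⟨0, le_rfl, fun v v' hv hv' x y => ?_⟩
      rw [StarPoly.evalAt_algebraMap, StarPoly.evalAt_algebraMap, sub_self, mul_zero,
        zero_mul, T.tau_zero]
      simp
  | grade1 g =>
      refine ⟨1, zero_le_one, fun v v' hv hv' x y => ?_⟩
      have hsum : 0 ≤ ∑ i, T.norm2 (v i - v' i) :=
        Finset.sum_nonneg fun i _ => T.norm2_nonneg _
      have key : ∀ w : M, T.norm2 w ≤ (∑ i, T.norm2 (v i - v' i)) →
          |(T.τ (x * w * y)).re| ≤ 1 * (‖x‖ * ‖y‖) * ∑ i, T.norm2 (v i - v' i) := by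
        intro w hw
        have h1 : T.τ (x * w * y) = T.τ ((y * x) * w) := by
          rw [T.tracial (x * w) y, ← mul_assoc]
        have h2 : |(T.τ ((y*x) * w)).re| ≤ T.norm2 (y*x) * T.norm2 w := by
          have := T.re_cs (star (y*x)) w
          rw [star_star, T.norm2_star] at this
          exact this
        have h3 : T.norm2 (y*x) ≤ ‖y‖ * ‖x‖ :=
          le_trans (T.norm2_le_norm _) (norm_mul_le _ _)
        rw [h1]
        calc |(T.τ ((y*x) * w)).re| ≤ T.norm2 (y*x) * T.norm2 w := h2
          _ ≤ (‖y‖ * ‖x‖) * ∑ i, T.norm2 (v i - v' i) :=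
              mul_le_mul h3 hw (T.norm2_nonneg _)
                (mul_nonneg (norm_nonneg _) (norm_nonneg _))
          _ = 1 * (‖x‖ * ‖y‖) * ∑ i, T.norm2 (v i - v' i) := by ring
      have hsingle : ∀ i : Fin n, T.norm2 (v i - v' i) ≤ ∑ j, T.norm2 (v j - v' j) :=
        fun i => Finset.single_le_sum (f := fun j => T.norm2 (v j - v' j))
          (fun j _ => T.norm2_nonneg _) (Finset.mem_univ i)
      rcases g with i | i
      · rw [StarPoly.evalAt_ι_inl, StarPoly.evalAt_ι_inl]
        exact key _ (hsingle i)
      · rw [StarPoly.evalAt_ι_inr, StarPoly.evalAt_ι_inr, ← star_sub]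
        apply key _ _
        rw [T.norm2_star]
        exact hsingle i
  | mul a b ha hb =>
      obtain ⟨Ca, hCa0, hCa⟩ := ha
      obtain ⟨Cb, hCb0, hCb⟩ := hb
      obtain ⟨Da, hDa0, hDa⟩ := opBound (M := M) a
      obtain ⟨Db, hDb0, hDb⟩ := opBound (M := M) b
      refine ⟨Ca * Db + Cb * Da, by positivity, fun v v' hv hv' x y => ?_⟩
      have hsum : 0 ≤ ∑ i, T.norm2 (v i - v' i) :=
        Finset.sum_nonneg fun i _ => T.norm2_nonneg _
      rw [StarPoly.evalAt_mul, StarPoly.evalAt_mul]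
      set P := StarPoly.evalAt a v with hP
      set P' := StarPoly.evalAt a v' with hP'
      set Qq := StarPoly.evalAt b v with hQq
      set Q' := StarPoly.evalAt b v' with hQ'
      have hsplit : x * (P * Qq - P' * Q') * y
          = x * (P - P') * (Qq * y) + (x * P') * (Qq - Q') * y := by
        noncomm_ring
      have hQy : ‖Qq * y‖ ≤ Db * ‖y‖ :=
        le_trans (norm_mul_le _ _) (mul_le_mul_of_nonneg_right (hDb v hv) (norm_nonneg _))
      have hxP : ‖x * P'‖ ≤ ‖x‖ * Da :=
        le_trans (norm_mul_le _ _) (mul_le_mul_of_nonneg_left (hDa v' hv') (norm_nonneg _))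
      have t1 := hCa v v' hv hv' x (Qq * y)
      have t2 := hCb v v' hv hv' (x * P') y
      have t1' : |(T.τ (x * (P - P') * (Qq * y))).re|
          ≤ Ca * (‖x‖ * (Db * ‖y‖)) * ∑ i, T.norm2 (v i - v' i) := by
        refine le_trans t1 ?_
        apply mul_le_mul_of_nonneg_right _ hsum
        apply mul_le_mul_of_nonneg_left _ hCa0
        exact mul_le_mul_of_nonneg_left hQy (norm_nonneg x)
      have t2' : |(T.τ ((x * P') * (Qq - Q') * y)).re|
          ≤ Cb * ((‖x‖ * Da) * ‖y‖) * ∑ i, T.norm2 (v i - v' i) := by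
        refine le_trans t2 ?_
        apply mul_le_mul_of_nonneg_right _ hsum
        apply mul_le_mul_of_nonneg_left _ hCb0
        exact mul_le_mul_of_nonneg_right hxP (norm_nonneg y)
      calc |(T.τ (x * (P * Qq - P' * Q') * y)).re|
          = |(T.τ (x * (P - P') * (Qq * y)) + T.τ ((x * P') * (Qq - Q') * y)).re| := by
            rw [← T.map_add, ← hsplit]
        _ ≤ |(T.τ (x * (P - P') * (Qq * y))).re| + |(T.τ ((x * P') * (Qq - Q') * y)).re| := by
            rw [Complex.add_re]; exact abs_add_le _ _
        _ ≤ Ca * (‖x‖ * (Db * ‖y‖)) * (∑ i, T.norm2 (v i - v' i))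
            + Cb * ((‖x‖ * Da) * ‖y‖) * ∑ i, T.norm2 (v i - v' i) := add_le_add t1' t2'
        _ = (Ca * Db + Cb * Da) * (‖x‖ * ‖y‖) * ∑ i, T.norm2 (v i - v' i) := by ring
  | add a b ha hb =>
      obtain ⟨Ca, hCa0, hCa⟩ := ha
      obtain ⟨Cb, hCb0, hCb⟩ := hb
      refine ⟨Ca + Cb, add_nonneg hCa0 hCb0, fun v v' hv hv' x y => ?_⟩
      have hsum : 0 ≤ ∑ i, T.norm2 (v i - v' i) :=
        Finset.sum_nonneg fun i _ => T.norm2_nonneg _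
      rw [StarPoly.evalAt_add, StarPoly.evalAt_add]
      have hsplit : x * (StarPoly.evalAt a v + StarPoly.evalAt b v
            - (StarPoly.evalAt a v' + StarPoly.evalAt b v')) * y
          = x * (StarPoly.evalAt a v - StarPoly.evalAt a v') * y
            + x * (StarPoly.evalAt b v - StarPoly.evalAt b v') * y := by
        noncomm_ring
      calc |(T.τ (x * (StarPoly.evalAt a v + StarPoly.evalAt b v
            - (StarPoly.evalAt a v' + StarPoly.evalAt b v')) * y)).re|
          = |(T.τ (x * (StarPoly.evalAt a v - StarPoly.evalAt a v') * y)
              + T.τ (x * (StarPoly.evalAt b v - StarPoly.evalAt b v') * y)).re| := by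
            rw [← T.map_add, ← hsplit]
        _ ≤ |(T.τ (x * (StarPoly.evalAt a v - StarPoly.evalAt a v') * y)).re|
            + |(T.τ (x * (StarPoly.evalAt b v - StarPoly.evalAt b v') * y)).re| := by
            rw [Complex.add_re]; exact abs_add_le _ _
        _ ≤ Ca * (‖x‖ * ‖y‖) * (∑ i, T.norm2 (v i - v' i))
            + Cb * (‖x‖ * ‖y‖) * ∑ i, T.norm2 (v i - v' i) :=
            add_le_add (hCa v v' hv hv' x y) (hCb v v' hv hv' x y)
        _ = (Ca + Cb) * (‖x‖ * ‖y‖) * ∑ i, T.norm2 (v i - v' i) := by ring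

end MBounds


section TransferMachinery

instance ubNonempty {M : Type*} [NormedRing M] :
    Nonempty {y : M // y ∈ (Set.univ : Set M) ∧ ‖y‖ ≤ 1} :=
  ⟨⟨0, Set.mem_univ _, by simp⟩⟩

/-- Iterated `sup` quantification of a formula. -/
def Formula.iterSup : ∀ {m : ℕ}, Formula m → Formula 0
  | 0, φ => φ
  | _+1, φ => Formula.iterSup φ.sup

theorem Formula.iterSup_zero (φ : Formula 0) : φ.iterSup = φ := rfl

theorem Formula.iterSup_succ {m : ℕ} (φ : Formula (m+1)) :
    φ.iterSup = Formula.iterSup φ.sup := rfl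

theorem snoc_unit {M : Type*} [NormedRing M] {m : ℕ} {w : Fin m → M} {x : M}
    (hw : ∀ i, ‖w i‖ ≤ 1) (hx : ‖x‖ ≤ 1) :
    ∀ i, ‖(Fin.snoc w x : Fin (m+1) → M) i‖ ≤ 1 := by
  intro i
  refine Fin.lastCases ?_ ?_ i
  · rw [Fin.snoc_last]; exact hx
  · intro j; rw [Fin.snoc_castSucc]; exact hw j

theorem eval_iterSup_nonpos {M : Type*} [NormedRing M] [StarRing M] [Algebra ℂ M]
    (T : TraceData M) : ∀ {m : ℕ} (φ : Formula m),
    (∀ w : Fin m → M, (∀ i, ‖w i‖ ≤ 1) → φ.eval T w ≤ 0) →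
    (Formula.iterSup φ).eval T (fun i => i.elim0) ≤ 0 := by
  intro m
  induction m with
  | zero => intro φ h; exact h _ (fun i => i.elim0)
  | succ m ih =>
      intro φ h
      refine ih φ.sup ?_
      intro w hw
      refine ciSup_le ?_
      rintro ⟨x, -, hx⟩
      exact h (Fin.snoc w x) (snoc_unit hw hx)

theorem le_eval_iterSup {M : Type*} [NormedRing M] [StarRing M] [Algebra ℂ M]
    (T : TraceData M) (c : ℝ) : ∀ {m : ℕ} (φ : Formula m),
    (∀ w, φ.eval T w ≤ c) → ∀ w : Fin m → M, (∀ i, ‖w i‖ ≤ 1) →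
    φ.eval T w ≤ (Formula.iterSup φ).eval T (fun i => i.elim0) := by
  intro m
  induction m with
  | zero =>
      intro φ hc w _
      have : w = (fun i => i.elim0) := funext fun i => i.elim0
      rw [this, Formula.iterSup_zero]
  | succ m ih =>
      intro φ hc w hw
      have hsc : ∀ w', Formula.eval T φ.sup w' ≤ c :=
        fun w' => ciSup_le fun x => hc _
      have hinit : ∀ i, ‖Fin.init w i‖ ≤ 1 := fun i => hw _
      have hbdd : BddAbove (Set.range fun x : {y : M // y ∈ (Set.univ : Set M) ∧ ‖y‖ ≤ 1} =>
          φ.eval T (Fin.snoc (Fin.init w) x.1)) := by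
        refine ⟨c, ?_⟩
        rintro y ⟨x, rfl⟩
        exact hc _
      calc φ.eval T w = φ.eval T (Fin.snoc (Fin.init w) (w (Fin.last m))) := by
            rw [Fin.snoc_init_self]
        _ ≤ ⨆ x : {y : M // y ∈ (Set.univ : Set M) ∧ ‖y‖ ≤ 1},
              φ.eval T (Fin.snoc (Fin.init w) x.1) :=
            le_ciSup hbdd ⟨w (Fin.last m), Set.mem_univ _, hw _⟩
        _ = Formula.eval T φ.sup (Fin.init w) := rfl
        _ ≤ (Formula.iterSup φ.sup).eval T (fun i => i.elim0) := ih φ.sup hsc _ hinit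
        _ = (Formula.iterSup φ).eval T (fun i => i.elim0) := by rw [Formula.iterSup_succ]

variable {M Q : Type*}
  [NormedRing M] [StarRing M] [Algebra ℂ M] [NormedStarGroup M]
  [NormedRing Q] [StarRing Q] [Algebra ℂ Q]
  {TM : TraceData M} {TQ : TraceData Q}
  {𝒰 : Ultrafilter ℕ} {π : BddSeq M → Q}

theorem eval_closed_eq (hπ : IsTracialUltrapower 𝒰 TM TQ π) (φ : Formula 0) :
    φ.eval TQ (fun i => i.elim0) = φ.eval TM (fun i => i.elim0) := by
  have h := hπ.los 0 φ (fun i => i.elim0)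
  have h1 : (fun k => φ.eval TM fun i => (((fun (i : Fin 0) => i.elim0) i : BddSeq M)).1 k)
      = fun _ => φ.eval TM (fun i => i.elim0) :=
    funext fun k => congrArg _ (funext fun i => i.elim0)
  have h2 : (fun i : Fin 0 => π (i.elim0)) = (fun i : Fin 0 => i.elim0) :=
    funext fun i => i.elim0
  rw [h1, h2] at h
  exact (tendsto_nhds_unique tendsto_const_nhds h).symm

/-- The master transfer principle: a formula which is everywhere bounded above
in the ultrapower and nonpositive on the unit ball of `M` is nonpositive on
the unit ball of the ultrapower. -/
theorem transfer (hπ : IsTracialUltrapower 𝒰 TM TQ π) {m : ℕ} (g : Formula m) (c : ℝ)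
    (hQb : ∀ w : Fin m → Q, g.eval TQ w ≤ c)
    (hM : ∀ w : Fin m → M, (∀ i, ‖w i‖ ≤ 1) → g.eval TM w ≤ 0) :
    ∀ w : Fin m → Q, (∀ i, ‖w i‖ ≤ 1) → g.eval TQ w ≤ 0 := by
  intro w hw
  have h1 : (Formula.iterSup g).eval TM (fun i => i.elim0) ≤ 0 := eval_iterSup_nonpos TM g hM
  have h2 := eval_closed_eq hπ (Formula.iterSup g)
  have h3 := le_eval_iterSup TQ c g hQb w hw
  linarith

end TransferMachinery

section UnitNorm2

/-- The star-polynomial `x₀* x₀`. -/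
def ppPoly : StarPoly 1 :=
  FreeAlgebra.ι ℂ (Sum.inr (0 : Fin 1)) * FreeAlgebra.ι ℂ (Sum.inl (0 : Fin 1))

theorem evalAt_ppPoly {N : Type*} [Ring N] [Algebra ℂ N] [StarRing N] (w : Fin 1 → N) :
    StarPoly.evalAt ppPoly w = star (w 0) * w 0 := by
  rw [ppPoly, StarPoly.evalAt_mul, StarPoly.evalAt_ι_inr, StarPoly.evalAt_ι_inl]

/-- The formula `min(‖x₀‖₂², c) - 1`. -/
def normFormula (c : ℝ) : Formula 1 :=
  Formula.comb (fun t : Fin 1 → ℝ => min (t 0) c - 1)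
    (((continuous_apply (0 : Fin 1)).min continuous_const).sub continuous_const)
    (fun _ => Formula.re ppPoly)

theorem eval_normFormula {N : Type*} [NormedRing N] [StarRing N] [Algebra ℂ N]
    (T : TraceData N) (c : ℝ) (w : Fin 1 → N) :
    (normFormula c).eval T w = min ((T.τ (star (w 0) * w 0)).re) c - 1 := by
  simp only [normFormula, Formula.eval, Formula.evalIn, evalAt_ppPoly]

variable {M Q : Type*}
  [NormedRing M] [StarRing M] [Algebra ℂ M] [NormedStarGroup M]
  [NormedRing Q] [StarRing Q] [Algebra ℂ Q]
  {TM : TraceData M} {TQ : TraceData Q}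
  {𝒰 : Ultrafilter ℕ} {π : BddSeq M → Q}

/-- In the ultrapower, elements of the unit ball have 2-norm at most one. -/
theorem unit_norm2 (hπ : IsTracialUltrapower 𝒰 TM TQ π) (q : Q) (hq : ‖q‖ ≤ 1) :
    TQ.norm2 q ≤ 1 := by
  set c : ℝ := TQ.norm2 q ^ 2 with hc
  have hQb : ∀ w : Fin 1 → Q, (normFormula c).eval TQ w ≤ c := by
    intro w
    rw [eval_normFormula]
    have := min_le_right ((TQ.τ (star (w 0) * w 0)).re) c
    linarith
  have hM : ∀ w : Fin 1 → M, (∀ i, ‖w i‖ ≤ 1) → (normFormula c).eval TM w ≤ 0 := by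
    intro w hw
    rw [eval_normFormula]
    have h1 : (TM.τ (star (w 0) * w 0)).re ≤ 1 := by
      rw [← TM.norm2_sq]
      nlinarith [TM.norm2_le_norm (w 0), hw 0, TM.norm2_nonneg (w 0), norm_nonneg (w 0)]
    have := min_le_left ((TM.τ (star (w 0) * w 0)).re) c
    linarith
  have := transfer hπ (normFormula c) c hQb hM (fun _ => q) (fun _ => hq)
  rw [eval_normFormula] at this
  have h2 : min ((TQ.τ (star q * q)).re) c = c := by
    rw [hc, TQ.norm2_sq]
    exact min_self _
  rw [h2] at this
  have h3 : TQ.norm2 q ^ 2 ≤ 1 := by rw [← hc]; linarith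
  nlinarith [TQ.norm2_nonneg q]

end UnitNorm2



section Rename

/-- Renaming of variables in star-polynomials. -/
def renameHom {n m : ℕ} (e : Fin n → Fin m) : StarPoly n →ₐ[ℂ] StarPoly m :=
  FreeAlgebra.lift ℂ (fun g => FreeAlgebra.ι ℂ (Sum.map e e g))

theorem evalAt_rename {N : Type*} [Ring N] [Algebra ℂ N] [StarRing N]
    {n m : ℕ} (e : Fin n → Fin m) (p : StarPoly n) (w : Fin m → N) :
    StarPoly.evalAt (renameHom e p) w = StarPoly.evalAt p (w ∘ e) := by
  have hcomp : (FreeAlgebra.lift ℂ (Sum.elim w fun i => star (w i))).comp (renameHom e)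
      = FreeAlgebra.lift ℂ (Sum.elim (w ∘ e) fun i => star ((w ∘ e) i)) := by
    apply FreeAlgebra.hom_ext
    funext g
    cases g with
    | inl i =>
        simp [renameHom, FreeAlgebra.lift_ι_apply]
    | inr i =>
        simp [renameHom, FreeAlgebra.lift_ι_apply]
  calc StarPoly.evalAt (renameHom e p) w
      = ((FreeAlgebra.lift ℂ (Sum.elim w fun i => star (w i))).comp (renameHom e)) p := rfl
    _ = StarPoly.evalAt p (w ∘ e) := by rw [hcomp]; rfl

/-- `(x_i − x_{n+i})* (x_i − x_{n+i})` as a star-polynomial in `n + n` variables. -/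
def diffPoly (n : ℕ) (i : Fin n) : StarPoly (n + n) :=
  (FreeAlgebra.ι ℂ (Sum.inr (Fin.castAdd n i)) - FreeAlgebra.ι ℂ (Sum.inr (Fin.natAdd n i)))
    * (FreeAlgebra.ι ℂ (Sum.inl (Fin.castAdd n i)) - FreeAlgebra.ι ℂ (Sum.inl (Fin.natAdd n i)))

theorem evalAt_diffPoly {N : Type*} [Ring N] [Algebra ℂ N] [StarRing N]
    {n : ℕ} (i : Fin n) (w : Fin (n + n) → N) :
    StarPoly.evalAt (diffPoly n i) w
      = star (w (Fin.castAdd n i) - w (Fin.natAdd n i))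
          * (w (Fin.castAdd n i) - w (Fin.natAdd n i)) := by
  rw [diffPoly, StarPoly.evalAt_mul, StarPoly.evalAt_sub, StarPoly.evalAt_sub,
    StarPoly.evalAt_ι_inr, StarPoly.evalAt_ι_inr, StarPoly.evalAt_ι_inl,
    StarPoly.evalAt_ι_inl, star_sub]

/-- The difference polynomial `p(x) − p(x')` in doubled variables. -/
def dPoly {n : ℕ} (p : StarPoly n) : StarPoly (n + n) :=
  renameHom (Fin.castAdd n) p - renameHom (Fin.natAdd n) p

/-- The formula `min(|re τ(p(x) − p(x'))|, c) − K·∑ᵢ ‖xᵢ − x'ᵢ‖₂`. -/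
def lipFormula {n : ℕ} (p : StarPoly n) (K c : ℝ) : Formula (n + n) :=
  Formula.comb
    (fun t : Fin (n + 1) → ℝ => min |t 0| c - K * ∑ i : Fin n, Real.sqrt (t i.succ))
    (((continuous_apply (0 : Fin (n+1))).abs.min continuous_const).sub
      (continuous_const.mul (continuous_finset_sum Finset.univ
        (fun i _ => Real.continuous_sqrt.comp (continuous_apply i.succ)))))
    (Fin.cons (Formula.re (dPoly p)) (fun i => Formula.re (diffPoly n i)))

theorem eval_lipFormula {N : Type*} [NormedRing N] [StarRing N] [Algebra ℂ N]
    (T : TraceData N) {n : ℕ} (p : StarPoly n) (K c : ℝ) (w : Fin (n + n) → N) :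
    (lipFormula p K c).eval T w
      = min |(T.τ (StarPoly.evalAt p (w ∘ Fin.castAdd n))).re
            - (T.τ (StarPoly.evalAt p (w ∘ Fin.natAdd n))).re| c
        - K * ∑ i : Fin n, T.norm2 (w (Fin.castAdd n i) - w (Fin.natAdd n i)) := by
  simp only [lipFormula, Formula.eval, Formula.evalIn, Fin.cons_zero, Fin.cons_succ,
    dPoly, StarPoly.evalAt_sub, evalAt_rename, evalAt_diffPoly, T.tau_sub,
    Complex.sub_re, TraceData.norm2]

end Rename

section QLip

variable {M Q : Type*}
  [NormedRing M] [StarRing M] [Algebra ℂ M] [NormedStarGroup M]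
  [NormedRing Q] [StarRing Q] [Algebra ℂ Q]
  {TM : TraceData M} {TQ : TraceData Q}
  {𝒰 : Ultrafilter ℕ} {π : BddSeq M → Q}

/-- 2-norm Lipschitz continuity of atomic formulas in the ultrapower. -/
theorem qLip (hπ : IsTracialUltrapower 𝒰 TM TQ π) {n : ℕ} (p : StarPoly n) :
    ∃ K : ℝ, 0 ≤ K ∧ ∀ v v' : Fin n → Q, (∀ i, ‖v i‖ ≤ 1) → (∀ i, ‖v' i‖ ≤ 1) →
      |(TQ.τ (StarPoly.evalAt p v)).re - (TQ.τ (StarPoly.evalAt p v')).re|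
        ≤ K * ∑ i, TQ.norm2 (v i - v' i) := by
  obtain ⟨C, hC0, hC⟩ := lipBound TM p
  refine ⟨C * (‖(1:M)‖ * ‖(1:M)‖), by positivity, fun v v' hv hv' => ?_⟩
  set K : ℝ := C * (‖(1:M)‖ * ‖(1:M)‖) with hK
  have hK0 : 0 ≤ K := by rw [hK]; positivity
  set w : Fin (n + n) → Q := Fin.append v v' with hw
  set c : ℝ := |(TQ.τ (StarPoly.evalAt p v)).re - (TQ.τ (StarPoly.evalAt p v')).re| with hcdef
  have hwunit : ∀ j, ‖w j‖ ≤ 1 := by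
    intro j
    rw [hw]
    refine Fin.addCases (fun i => ?_) (fun i => ?_) j
    · rw [Fin.append_left]; exact hv i
    · rw [Fin.append_right]; exact hv' i
  have hQb : ∀ u : Fin (n + n) → Q, (lipFormula p K c).eval TQ u ≤ c := by
    intro u
    rw [eval_lipFormula]
    have h1 := min_le_right
      |(TQ.τ (StarPoly.evalAt p (u ∘ Fin.castAdd n))).re
        - (TQ.τ (StarPoly.evalAt p (u ∘ Fin.natAdd n))).re| c
    have h2 : 0 ≤ K * ∑ i : Fin n, TQ.norm2 (u (Fin.castAdd n i) - u (Fin.natAdd n i)) :=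
      mul_nonneg hK0 (Finset.sum_nonneg fun i _ => TQ.norm2_nonneg _)
    linarith
  have hM : ∀ u : Fin (n + n) → M, (∀ i, ‖u i‖ ≤ 1) → (lipFormula p K c).eval TM u ≤ 0 := by
    intro u hu
    rw [eval_lipFormula]
    have key := hC (u ∘ Fin.castAdd n) (u ∘ Fin.natAdd n)
      (fun i => hu _) (fun i => hu _) 1 1
    rw [one_mul, mul_one] at key
    have hτ : (TM.τ (StarPoly.evalAt p (u ∘ Fin.castAdd n)
          - StarPoly.evalAt p (u ∘ Fin.natAdd n))).re
        = (TM.τ (StarPoly.evalAt p (u ∘ Fin.castAdd n))).re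
          - (TM.τ (StarPoly.evalAt p (u ∘ Fin.natAdd n))).re := by
      rw [TM.tau_sub, Complex.sub_re]
    rw [hτ] at key
    rw [← hK] at key
    simp only [Function.comp_apply] at key
    have hmin := min_le_left
      |(TM.τ (StarPoly.evalAt p (u ∘ Fin.castAdd n))).re
        - (TM.τ (StarPoly.evalAt p (u ∘ Fin.natAdd n))).re| c
    linarith
  have hfin := transfer hπ (lipFormula p K c) c hQb hM w hwunit
  rw [eval_lipFormula] at hfin
  have hw1 : w ∘ Fin.castAdd n = v := funext fun i => by rw [hw]; exact Fin.append_left _ _ _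
  have hw2 : w ∘ Fin.natAdd n = v' := funext fun i => by rw [hw]; exact Fin.append_right _ _ _
  rw [hw1, hw2] at hfin
  simp only [hw, Fin.append_left, Fin.append_right] at hfin
  rw [← hcdef, min_self] at hfin
  have hsum : ∑ i : Fin n, TQ.norm2 (v i - v' i) ≤ ∑ i, TQ.norm2 (v i - v' i) := le_rfl
  linarith

end QLip


section QCont

theorem tau_im_eq_re {N : Type*} [NormedRing N] [StarRing N] [Algebra ℂ N]
    (T : TraceData N) {n : ℕ} (p : StarPoly n) (v : Fin n → N) :
    (T.τ (StarPoly.evalAt p v)).im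
      = (T.τ (StarPoly.evalAt ((-Complex.I) • p) v)).re := by
  rw [StarPoly.evalAt_smul, T.map_smul]
  simp [Complex.mul_re]

variable {M Q : Type*}
  [NormedRing M] [StarRing M] [Algebra ℂ M] [NormedStarGroup M]
  [NormedRing Q] [StarRing Q] [Algebra ℂ Q]
  {TM : TraceData M} {TQ : TraceData Q}
  {𝒰 : Ultrafilter ℕ} {π : BddSeq M → Q}

theorem qAtomRe (hπ : IsTracialUltrapower 𝒰 TM TQ π) {n : ℕ} (p : StarPoly n) :
    ∃ B : ℝ, ∀ v : Fin n → Q, (∀ i, ‖v i‖ ≤ 1) →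
      |(TQ.τ (StarPoly.evalAt p v)).re| ≤ B := by
  obtain ⟨K, hK0, hK⟩ := qLip hπ p
  refine ⟨K * n + |(TQ.τ (StarPoly.evalAt p (fun _ => (0:Q)))).re|, fun v hv => ?_⟩
  have h1 := hK v (fun _ => 0) hv (fun i => by simp)
  have h2 : ∑ i : Fin n, TQ.norm2 (v i - 0) ≤ (n:ℝ) := by
    have hle : ∀ i : Fin n, TQ.norm2 (v i - 0) ≤ 1 := fun i => by
      rw [sub_zero]; exact unit_norm2 hπ (v i) (hv i)
    calc ∑ i, TQ.norm2 (v i - 0) ≤ ∑ _i : Fin n, (1:ℝ) :=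
          Finset.sum_le_sum (fun i _ => hle i)
      _ = n := by simp
  have h3 : |(TQ.τ (StarPoly.evalAt p v)).re|
      ≤ |(TQ.τ (StarPoly.evalAt p v)).re - (TQ.τ (StarPoly.evalAt p (fun _ => (0:Q)))).re|
        + |(TQ.τ (StarPoly.evalAt p (fun _ => (0:Q)))).re| := by
    have h5 := abs_add_le
      ((TQ.τ (StarPoly.evalAt p v)).re - (TQ.τ (StarPoly.evalAt p (fun _ => (0:Q)))).re)
      ((TQ.τ (StarPoly.evalAt p (fun _ => (0:Q)))).re)
    rw [sub_add_cancel] at h5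
    exact h5
  have h4 : K * (∑ i : Fin n, TQ.norm2 (v i - 0)) ≤ K * n :=
    mul_le_mul_of_nonneg_left h2 hK0
  linarith

/-- Boundedness of formula values on unit tuples of the ultrapower. -/
theorem qBounded (hπ : IsTracialUltrapower 𝒰 TM TQ π) :
    ∀ {n : ℕ} (φ : Formula n), ∃ B : ℝ, ∀ v : Fin n → Q, (∀ i, ‖v i‖ ≤ 1) →
      |φ.eval TQ v| ≤ B := by
  intro n φ
  induction φ with
  | re p => exact qAtomRe hπ p
  | im p =>
      obtain ⟨B, hB⟩ := qAtomRe hπ ((-Complex.I) • p)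
      exact ⟨B, fun v hv => by
        show |(TQ.τ (StarPoly.evalAt p v)).im| ≤ B
        rw [tau_im_eq_re]
        exact hB v hv⟩
  | comb f hf φs ih =>
      choose B hB using ih
      set K : Set (_ → ℝ) := Set.univ.pi (fun i => Set.Icc (-(B i)) (B i)) with hKdef
      have hK : IsCompact K := isCompact_univ_pi (fun i => isCompact_Icc)
      obtain ⟨R, hR⟩ := (hK.image hf).isBounded.subset_closedBall 0
      refine ⟨R, fun v hv => ?_⟩
      have hmem : (fun i => (φs i).eval TQ v) ∈ K := by
        rw [hKdef, Set.mem_univ_pi]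
        intro i
        exact Set.mem_Icc.mpr (abs_le.mp (hB i v hv))
      have : f (fun i => (φs i).eval TQ v) ∈ Metric.closedBall (0:ℝ) R :=
        hR (Set.mem_image_of_mem f hmem)
      rw [Metric.mem_closedBall, Real.dist_eq, sub_zero] at this
      exact this
  | sup φ ih =>
      obtain ⟨B, hB⟩ := ih
      refine ⟨B, fun v hv => ?_⟩
      have hbdd : BddAbove (Set.range fun x : {y : Q // y ∈ (Set.univ : Set Q) ∧ ‖y‖ ≤ 1} =>
          φ.eval TQ (Fin.snoc v x.1)) := by
        refine ⟨B, ?_⟩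
        rintro y ⟨x, rfl⟩
        exact (abs_le.mp (hB _ (snoc_unit hv x.2.2))).2
      rw [abs_le]
      constructor
      · calc -B ≤ φ.eval TQ (Fin.snoc v (0:Q)) :=
            (abs_le.mp (hB _ (snoc_unit hv (by simp)))).1
          _ ≤ _ := le_ciSup hbdd ⟨0, Set.mem_univ _, by simp⟩
      · exact ciSup_le fun x => (abs_le.mp (hB _ (snoc_unit hv x.2.2))).2
  | inf φ ih =>
      obtain ⟨B, hB⟩ := ih
      refine ⟨B, fun v hv => ?_⟩
      have hbdd : BddBelow (Set.range fun x : {y : Q // y ∈ (Set.univ : Set Q) ∧ ‖y‖ ≤ 1} =>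
          φ.eval TQ (Fin.snoc v x.1)) := by
        refine ⟨-B, ?_⟩
        rintro y ⟨x, rfl⟩
        exact (abs_le.mp (hB _ (snoc_unit hv x.2.2))).1
      rw [abs_le]
      constructor
      · exact le_ciInf fun x => (abs_le.mp (hB _ (snoc_unit hv x.2.2))).1
      · calc (⨅ x : {y : Q // y ∈ (Set.univ : Set Q) ∧ ‖y‖ ≤ 1},
              φ.eval TQ (Fin.snoc v x.1))
            ≤ φ.eval TQ (Fin.snoc v (0:Q)) := ciInf_le hbdd ⟨0, Set.mem_univ _, by simp⟩
          _ ≤ B := (abs_le.mp (hB _ (snoc_unit hv (by simp)))).2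

theorem snoc_sum_norm2 (T : TraceData Q) {n : ℕ} (v v' : Fin n → Q) (x : Q) :
    ∑ i : Fin (n+1), T.norm2 ((Fin.snoc v x : Fin (n+1) → Q) i
        - (Fin.snoc v' x : Fin (n+1) → Q) i)
      = ∑ i : Fin n, T.norm2 (v i - v' i) := by
  rw [Fin.sum_univ_castSucc]
  simp only [Fin.snoc_castSucc, Fin.snoc_last, sub_self, T.norm2_zero, add_zero]

/-- Uniform 2-norm continuity of formula evaluation on unit tuples. -/
theorem qUC (hπ : IsTracialUltrapower 𝒰 TM TQ π) :
    ∀ {n : ℕ} (φ : Formula n) (ε : ℝ), 0 < ε → ∃ δ : ℝ, 0 < δ ∧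
      ∀ v v' : Fin n → Q, (∀ i, ‖v i‖ ≤ 1) → (∀ i, ‖v' i‖ ≤ 1) →
        (∑ i, TQ.norm2 (v i - v' i)) ≤ δ →
        |φ.eval TQ v - φ.eval TQ v'| ≤ ε := by
  intro n φ
  induction φ with
  | re p =>
      intro ε hε
      obtain ⟨K, hK0, hK⟩ := qLip hπ p
      refine ⟨ε / (K + 1), by positivity, fun v v' hv hv' hδ => ?_⟩
      calc |(TQ.τ (StarPoly.evalAt p v)).re - (TQ.τ (StarPoly.evalAt p v')).re|
          ≤ K * ∑ i, TQ.norm2 (v i - v' i) := hK v v' hv hv'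
        _ ≤ K * (ε / (K + 1)) := mul_le_mul_of_nonneg_left hδ hK0
        _ ≤ ε := by
            rw [← mul_div_assoc, div_le_iff₀ (by positivity : (0:ℝ) < K + 1)]
            nlinarith
  | im p =>
      intro ε hε
      obtain ⟨K, hK0, hK⟩ := qLip hπ ((-Complex.I) • p)
      refine ⟨ε / (K + 1), by positivity, fun v v' hv hv' hδ => ?_⟩
      show |(TQ.τ (StarPoly.evalAt p v)).im - (TQ.τ (StarPoly.evalAt p v')).im| ≤ ε
      rw [tau_im_eq_re, tau_im_eq_re]
      calc |(TQ.τ (StarPoly.evalAt ((-Complex.I) • p) v)).re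
            - (TQ.τ (StarPoly.evalAt ((-Complex.I) • p) v')).re|
          ≤ K * ∑ i, TQ.norm2 (v i - v' i) := hK v v' hv hv'
        _ ≤ K * (ε / (K + 1)) := mul_le_mul_of_nonneg_left hδ hK0
        _ ≤ ε := by
            rw [← mul_div_assoc, div_le_iff₀ (by positivity : (0:ℝ) < K + 1)]
            nlinarith
  | @comb n k f hf φs ih =>
      intro ε hε
      rcases isEmpty_or_nonempty (Fin k) with hk | hk
      · refine ⟨1, one_pos, fun v v' hv hv' hδ => ?_⟩
        have heq : (fun i => Formula.evalIn TQ Set.univ (φs i) v)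
            = (fun i => Formula.evalIn TQ Set.univ (φs i) v') :=
          funext fun i => isEmptyElim i
        show |(f fun i => Formula.evalIn TQ Set.univ (φs i) v)
          - f fun i => Formula.evalIn TQ Set.univ (φs i) v'| ≤ ε
        rw [heq, sub_self, abs_zero]
        exact le_of_lt hε
      · choose B hB using fun i => qBounded hπ (φs i)
        set K : Set (_ → ℝ) := Set.univ.pi (fun i => Set.Icc (-(B i)) (B i)) with hKdef
        have hKcpt : IsCompact K := isCompact_univ_pi (fun i => isCompact_Icc)
        have huc : UniformContinuousOn f K :=
          hKcpt.uniformContinuousOn_of_continuous hf.continuousOn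
        rw [Metric.uniformContinuousOn_iff] at huc
        obtain ⟨η, hη0, hη⟩ := huc ε hε
        choose δ hδ0 hδ using fun i => ih i (η/2) (half_pos hη0)
        refine ⟨Finset.univ.inf' (Finset.univ_nonempty) δ, ?_, fun v v' hv hv' hsum => ?_⟩
        · rw [Finset.lt_inf'_iff]
          exact fun i _ => hδ0 i
        · have hmem : (fun i => (φs i).eval TQ v) ∈ K := by
            rw [hKdef, Set.mem_univ_pi]
            exact fun i => Set.mem_Icc.mpr (abs_le.mp (hB i v hv))
          have hmem' : (fun i => (φs i).eval TQ v') ∈ K := by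
            rw [hKdef, Set.mem_univ_pi]
            exact fun i => Set.mem_Icc.mpr (abs_le.mp (hB i v' hv'))
          have hdist : dist (fun i => (φs i).eval TQ v) (fun i => (φs i).eval TQ v') < η := by
            rw [dist_pi_lt_iff hη0]
            intro i
            rw [Real.dist_eq]
            have hi := hδ i v v' hv hv'
              (le_trans hsum (Finset.inf'_le δ (Finset.mem_univ i)))
            calc |(φs i).eval TQ v - (φs i).eval TQ v'| ≤ η/2 := hi
              _ < η := by linarith
          have hfin := hη _ hmem _ hmem' hdist
          rw [Real.dist_eq] at hfin
          exact le_of_lt hfin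
  | sup φ ih =>
      intro ε hε
      obtain ⟨δ, hδ0, hδ⟩ := ih ε hε
      obtain ⟨B, hB⟩ := qBounded hπ φ
      refine ⟨δ, hδ0, fun v v' hv hv' hsum => ?_⟩
      have hbdd : BddAbove (Set.range fun x : {y : Q // y ∈ (Set.univ : Set Q) ∧ ‖y‖ ≤ 1} =>
          φ.eval TQ (Fin.snoc v x.1)) :=
        ⟨B, by rintro y ⟨x, rfl⟩; exact (abs_le.mp (hB _ (snoc_unit hv x.2.2))).2⟩
      have hbdd' : BddAbove (Set.range fun x : {y : Q // y ∈ (Set.univ : Set Q) ∧ ‖y‖ ≤ 1} =>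
          φ.eval TQ (Fin.snoc v' x.1)) :=
        ⟨B, by rintro y ⟨x, rfl⟩; exact (abs_le.mp (hB _ (snoc_unit hv' x.2.2))).2⟩
      have hpt : ∀ x : {y : Q // y ∈ (Set.univ : Set Q) ∧ ‖y‖ ≤ 1},
          |φ.eval TQ (Fin.snoc v x.1) - φ.eval TQ (Fin.snoc v' x.1)| ≤ ε := by
        intro x
        apply hδ _ _ (snoc_unit hv x.2.2) (snoc_unit hv' x.2.2)
        rw [snoc_sum_norm2 TQ v v' x.1]
        exact hsum
      show |(⨆ x : {y : Q // y ∈ (Set.univ : Set Q) ∧ ‖y‖ ≤ 1},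
          φ.eval TQ (Fin.snoc v x.1))
        - (⨆ x : {y : Q // y ∈ (Set.univ : Set Q) ∧ ‖y‖ ≤ 1},
          φ.eval TQ (Fin.snoc v' x.1))| ≤ ε
      rw [abs_sub_le_iff]
      constructor
      · rw [sub_le_iff_le_add]
        refine ciSup_le fun x => ?_
        have h1 := (abs_sub_le_iff.mp (hpt x)).1
        have h2 := le_ciSup hbdd' x
        linarith
      · rw [sub_le_iff_le_add]
        refine ciSup_le fun x => ?_
        have h1 := (abs_sub_le_iff.mp (hpt x)).2
        have h2 := le_ciSup hbdd x
        linarith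
  | inf φ ih =>
      intro ε hε
      obtain ⟨δ, hδ0, hδ⟩ := ih ε hε
      obtain ⟨B, hB⟩ := qBounded hπ φ
      refine ⟨δ, hδ0, fun v v' hv hv' hsum => ?_⟩
      have hbdd : BddBelow (Set.range fun x : {y : Q // y ∈ (Set.univ : Set Q) ∧ ‖y‖ ≤ 1} =>
          φ.eval TQ (Fin.snoc v x.1)) :=
        ⟨-B, by rintro y ⟨x, rfl⟩; exact (abs_le.mp (hB _ (snoc_unit hv x.2.2))).1⟩
      have hbdd' : BddBelow (Set.range fun x : {y : Q // y ∈ (Set.univ : Set Q) ∧ ‖y‖ ≤ 1} =>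
          φ.eval TQ (Fin.snoc v' x.1)) :=
        ⟨-B, by rintro y ⟨x, rfl⟩; exact (abs_le.mp (hB _ (snoc_unit hv' x.2.2))).1⟩
      have hpt : ∀ x : {y : Q // y ∈ (Set.univ : Set Q) ∧ ‖y‖ ≤ 1},
          |φ.eval TQ (Fin.snoc v x.1) - φ.eval TQ (Fin.snoc v' x.1)| ≤ ε := by
        intro x
        apply hδ _ _ (snoc_unit hv x.2.2) (snoc_unit hv' x.2.2)
        rw [snoc_sum_norm2 TQ v v' x.1]
        exact hsum
      show |(⨅ x : {y : Q // y ∈ (Set.univ : Set Q) ∧ ‖y‖ ≤ 1},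
          φ.eval TQ (Fin.snoc v x.1))
        - (⨅ x : {y : Q // y ∈ (Set.univ : Set Q) ∧ ‖y‖ ≤ 1},
          φ.eval TQ (Fin.snoc v' x.1))| ≤ ε
      rw [abs_sub_le_iff]
      constructor
      · rw [sub_le_iff_le_add]
        have key : (⨅ x : {y : Q // y ∈ (Set.univ : Set Q) ∧ ‖y‖ ≤ 1},
            φ.eval TQ (Fin.snoc v x.1)) - ε
            ≤ ⨅ x : {y : Q // y ∈ (Set.univ : Set Q) ∧ ‖y‖ ≤ 1},
              φ.eval TQ (Fin.snoc v' x.1) := by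
          refine le_ciInf fun x => ?_
          have h1 := (abs_sub_le_iff.mp (hpt x)).1
          have h2 := ciInf_le hbdd x
          linarith
        linarith
      · rw [sub_le_iff_le_add]
        have key : (⨅ x : {y : Q // y ∈ (Set.univ : Set Q) ∧ ‖y‖ ≤ 1},
            φ.eval TQ (Fin.snoc v' x.1)) - ε
            ≤ ⨅ x : {y : Q // y ∈ (Set.univ : Set Q) ∧ ‖y‖ ≤ 1},
              φ.eval TQ (Fin.snoc v x.1) := by
          refine le_ciInf fun x => ?_
          have h1 := (abs_sub_le_iff.mp (hpt x)).2
          have h2 := ciInf_le hbdd' x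
          linarith
        linarith

end QCont


section AutInv

variable {Q : Type*} [NormedRing Q] [StarRing Q] [Algebra ℂ Q] {TQ : TraceData Q}

theorem evalAt_aut (α : TraceAut TQ) {n : ℕ} (p : StarPoly n) (v : Fin n → Q) :
    StarPoly.evalAt p (fun i => α.toEquiv (v i)) = α.toEquiv (StarPoly.evalAt p v) := by
  induction p using FreeAlgebra.induction with
  | grade0 r =>
      rw [StarPoly.evalAt_algebraMap, StarPoly.evalAt_algebraMap,
        Algebra.algebraMap_eq_smul_one, map_smul, map_one]
  | grade1 g =>
      rcases g with i | i
      · rw [StarPoly.evalAt_ι_inl, StarPoly.evalAt_ι_inl]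
      · rw [StarPoly.evalAt_ι_inr, StarPoly.evalAt_ι_inr, map_star]
  | mul p q hp hq =>
      rw [StarPoly.evalAt_mul, StarPoly.evalAt_mul, hp, hq, map_mul]
  | add p q hp hq =>
      rw [StarPoly.evalAt_add, StarPoly.evalAt_add, hp, hq, map_add]

theorem aut_norm2 (α : TraceAut TQ) (x : Q) :
    TQ.norm2 (α.toEquiv x) = TQ.norm2 x := by
  unfold TraceData.norm2
  rw [← map_star, ← map_mul, α.trace_eq]

theorem aut_symm_norm (α : TraceAut TQ) (x : Q) : ‖α.toEquiv.symm x‖ = ‖x‖ := by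
  have h := α.isometric (α.toEquiv.symm x)
  rw [StarAlgEquiv.apply_symm_apply] at h
  exact h.symm

/-- Formula evaluation is invariant under trace-preserving automorphisms. -/
theorem autInv (α : TraceAut TQ) : ∀ {n : ℕ} (φ : Formula n) (v : Fin n → Q),
    φ.eval TQ (fun i => α.toEquiv (v i)) = φ.eval TQ v := by
  intro n φ
  induction φ with
  | re p =>
      intro v
      show (TQ.τ (StarPoly.evalAt p (fun i => α.toEquiv (v i)))).re = _
      rw [evalAt_aut, α.trace_eq]
      rfl
  | im p =>
      intro v
      show (TQ.τ (StarPoly.evalAt p (fun i => α.toEquiv (v i)))).im = _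
      rw [evalAt_aut, α.trace_eq]
      rfl
  | comb f hf φs ih =>
      intro v
      exact congrArg f (funext fun i => ih i v)
  | sup φ ih =>
      intro v
      have hkey : ∀ x : {y : Q // y ∈ (Set.univ : Set Q) ∧ ‖y‖ ≤ 1},
          Formula.evalIn TQ Set.univ φ
            (Fin.snoc (fun i => α.toEquiv (v i)) x.1)
          = Formula.evalIn TQ Set.univ φ (Fin.snoc v (α.toEquiv.symm x.1)) := by
        intro x
        have harg : (Fin.snoc (fun i => α.toEquiv (v i)) x.1 : Fin (_+1) → Q)
            = fun i => α.toEquiv ((Fin.snoc v (α.toEquiv.symm x.1) : Fin (_+1) → Q) i) := by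
          funext i
          refine Fin.lastCases ?_ ?_ i
          · rw [Fin.snoc_last, Fin.snoc_last, StarAlgEquiv.apply_symm_apply]
          · intro j; rw [Fin.snoc_castSucc, Fin.snoc_castSucc]
        rw [harg]
        exact ih (Fin.snoc v (α.toEquiv.symm x.1))
      have hrange : (Set.range fun x : {y : Q // y ∈ (Set.univ : Set Q) ∧ ‖y‖ ≤ 1} =>
            Formula.evalIn TQ Set.univ φ (Fin.snoc (fun i => α.toEquiv (v i)) x.1))
          = Set.range fun x : {y : Q // y ∈ (Set.univ : Set Q) ∧ ‖y‖ ≤ 1} =>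
            Formula.evalIn TQ Set.univ φ (Fin.snoc v x.1) := by
        ext r
        constructor
        · rintro ⟨x, rfl⟩
          exact ⟨⟨α.toEquiv.symm x.1, Set.mem_univ _,
            by rw [aut_symm_norm]; exact x.2.2⟩, (hkey x).symm⟩
        · rintro ⟨y, rfl⟩
          refine ⟨⟨α.toEquiv y.1, Set.mem_univ _, by rw [α.isometric]; exact y.2.2⟩, ?_⟩
          have hy := hkey ⟨α.toEquiv y.1, Set.mem_univ _, by rw [α.isometric]; exact y.2.2⟩
          simp only [StarAlgEquiv.symm_apply_apply] at hy
          exact hy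
      exact congrArg sSup hrange
  | inf φ ih =>
      intro v
      have hkey : ∀ x : {y : Q // y ∈ (Set.univ : Set Q) ∧ ‖y‖ ≤ 1},
          Formula.evalIn TQ Set.univ φ
            (Fin.snoc (fun i => α.toEquiv (v i)) x.1)
          = Formula.evalIn TQ Set.univ φ (Fin.snoc v (α.toEquiv.symm x.1)) := by
        intro x
        have harg : (Fin.snoc (fun i => α.toEquiv (v i)) x.1 : Fin (_+1) → Q)
            = fun i => α.toEquiv ((Fin.snoc v (α.toEquiv.symm x.1) : Fin (_+1) → Q) i) := by
          funext i
          refine Fin.lastCases ?_ ?_ i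
          · rw [Fin.snoc_last, Fin.snoc_last, StarAlgEquiv.apply_symm_apply]
          · intro j; rw [Fin.snoc_castSucc, Fin.snoc_castSucc]
        rw [harg]
        exact ih (Fin.snoc v (α.toEquiv.symm x.1))
      have hrange : (Set.range fun x : {y : Q // y ∈ (Set.univ : Set Q) ∧ ‖y‖ ≤ 1} =>
            Formula.evalIn TQ Set.univ φ (Fin.snoc (fun i => α.toEquiv (v i)) x.1))
          = Set.range fun x : {y : Q // y ∈ (Set.univ : Set Q) ∧ ‖y‖ ≤ 1} =>
            Formula.evalIn TQ Set.univ φ (Fin.snoc v x.1) := by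
        ext r
        constructor
        · rintro ⟨x, rfl⟩
          exact ⟨⟨α.toEquiv.symm x.1, Set.mem_univ _,
            by rw [aut_symm_norm]; exact x.2.2⟩, (hkey x).symm⟩
        · rintro ⟨y, rfl⟩
          refine ⟨⟨α.toEquiv y.1, Set.mem_univ _, by rw [α.isometric]; exact y.2.2⟩, ?_⟩
          have hy := hkey ⟨α.toEquiv y.1, Set.mem_univ _, by rw [α.isometric]; exact y.2.2⟩
          simp only [StarAlgEquiv.symm_apply_apply] at hy
          exact hy
      exact congrArg sInf hrange

end AutInv


end AUX

/-- Orbits of countable tuples under `Aut(M^𝒰)` are `‖·‖₁`-closed: if `M^𝒰` is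
countably saturated and countably homogeneous (as under CH), `a, b` are
countable tuples from the unit ball of `M^𝒰`, and `α_n ∈ Aut(M^𝒰)` satisfy
`‖α_n(a) − b‖₁ → 0` where `‖a − b‖₁ = Σ_j 2^{−j} ‖a_j − b_j‖₂`, then there is
`α ∈ Aut(M^𝒰)` with `α(a) = b`. -/
theorem stmt_7 {M Q : Type*}
    [NormedRing M] [StarRing M] [Algebra ℂ M] [NormedStarGroup M]
    [NormedRing Q] [StarRing Q] [Algebra ℂ Q]
    (TM : TraceData M) (TQ : TraceData Q)
    (𝒰 : Ultrafilter ℕ) (h𝒰 : (𝒰 : Filter ℕ) ≤ Filter.cofinite)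
    (π : BddSeq M → Q) (hπ : IsTracialUltrapower 𝒰 TM TQ π)
    (hsat : SeparablySaturated TQ) (hhom : CountablyHomogeneous TQ)
    (a b : ℕ → Q) (ha : ∀ j, ‖a j‖ ≤ 1) (hb : ∀ j, ‖b j‖ ≤ 1)
    (α : ℕ → TraceAut TQ)
    (hconv : Filter.Tendsto
      (fun n => ∑' j : ℕ, (1 / 2 : ℝ) ^ j * TQ.norm2 ((α n).toEquiv (a j) - b j))
      Filter.atTop (nhds 0)) :
    ∃ β : TraceAut TQ, ∀ j, β.toEquiv (a j) = b j := by
  have hsame : SameType TQ a b := by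
      intro n φ s
      have key : ∀ ε : ℝ, 0 < ε → |φ.eval TQ (a ∘ s) - φ.eval TQ (b ∘ s)| ≤ ε := by
        intro ε hε
        obtain ⟨δ, hδ0, hδ⟩ := qUC hπ φ ε hε
        -- uniform bound on the summands
        have hub : ∀ (N : ℕ) (j : ℕ), TQ.norm2 ((α N).toEquiv (a j) - b j) ≤ 2 := by
          intro N j
          calc TQ.norm2 ((α N).toEquiv (a j) - b j)
              ≤ TQ.norm2 ((α N).toEquiv (a j)) + TQ.norm2 (b j) := TQ.norm2_sub_le _ _
            _ ≤ 1 + 1 := add_le_add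
                (by rw [aut_norm2]; exact unit_norm2 hπ _ (ha j))
                (unit_norm2 hπ _ (hb j))
            _ = 2 := by norm_num
        have hsumm : ∀ N : ℕ,
            Summable (fun j : ℕ => (1/2:ℝ)^j * TQ.norm2 ((α N).toEquiv (a j) - b j)) := by
          intro N
          refine Summable.of_nonneg_of_le
            (fun j => mul_nonneg (by positivity) (TQ.norm2_nonneg _))
            (fun j => ?_)
            ((summable_geometric_of_lt_one (r := (1/2:ℝ)) (by norm_num) (by norm_num)).mul_left 2)
          calc (1/2:ℝ)^j * TQ.norm2 ((α N).toEquiv (a j) - b j)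
              ≤ (1/2:ℝ)^j * 2 := mul_le_mul_of_nonneg_left (hub N j) (by positivity)
            _ = 2 * (1/2:ℝ)^j := by ring
        have hterm : ∀ (N j : ℕ), TQ.norm2 ((α N).toEquiv (a j) - b j)
            ≤ (2:ℝ)^j * ∑' k : ℕ, (1/2:ℝ)^k * TQ.norm2 ((α N).toEquiv (a k) - b k) := by
          intro N j
          have h1 : (1/2:ℝ)^j * TQ.norm2 ((α N).toEquiv (a j) - b j)
              ≤ ∑' k : ℕ, (1/2:ℝ)^k * TQ.norm2 ((α N).toEquiv (a k) - b k) :=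
            Summable.le_tsum (hsumm N) j
              (fun k _ => mul_nonneg (by positivity) (TQ.norm2_nonneg _))
          have hp : (0:ℝ) < (1/2:ℝ)^j := by positivity
          have h2 : ((1/2:ℝ)^j)⁻¹ = (2:ℝ)^j := by
            rw [← inv_pow]; norm_num
          calc TQ.norm2 ((α N).toEquiv (a j) - b j)
              = ((1/2:ℝ)^j)⁻¹ * ((1/2:ℝ)^j * TQ.norm2 ((α N).toEquiv (a j) - b j)) := by
                field_simp
            _ ≤ ((1/2:ℝ)^j)⁻¹ * ∑' k : ℕ, (1/2:ℝ)^k * TQ.norm2 ((α N).toEquiv (a k) - b k) :=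
                mul_le_mul_of_nonneg_left h1 (by positivity)
            _ = (2:ℝ)^j * ∑' k : ℕ, (1/2:ℝ)^k * TQ.norm2 ((α N).toEquiv (a k) - b k) := by
                rw [h2]
        set C : ℝ := ∑ i : Fin n, (2:ℝ)^(s i) with hC
        have hC0 : 0 ≤ C := Finset.sum_nonneg fun i _ => by positivity
        -- choose N with small tail
        rw [Metric.tendsto_atTop] at hconv
        obtain ⟨N, hN⟩ := hconv (δ / (C + 1)) (by positivity)
        have htN := hN N le_rfl
        rw [Real.dist_eq, sub_zero] at htN
        set tN : ℝ := ∑' j : ℕ, (1/2:ℝ)^j * TQ.norm2 ((α N).toEquiv (a j) - b j) with htNdef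
        have htN0 : 0 ≤ tN :=
          tsum_nonneg fun j => mul_nonneg (by positivity) (TQ.norm2_nonneg _)
        have htNlt : tN < δ / (C + 1) := by rwa [abs_of_nonneg htN0] at htN
        -- the sum over the finite tuple is small
        have hsum : ∑ i : Fin n, TQ.norm2 ((α N).toEquiv (a (s i)) - b (s i)) ≤ δ := by
          have h1 : ∀ i : Fin n, TQ.norm2 ((α N).toEquiv (a (s i)) - b (s i))
              ≤ (2:ℝ)^(s i) * tN := fun i => hterm N (s i)
          calc ∑ i : Fin n, TQ.norm2 ((α N).toEquiv (a (s i)) - b (s i))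
              ≤ ∑ i : Fin n, (2:ℝ)^(s i) * tN := Finset.sum_le_sum fun i _ => h1 i
            _ = C * tN := by rw [hC, Finset.sum_mul]
            _ ≤ C * (δ / (C + 1)) := mul_le_mul_of_nonneg_left (le_of_lt htNlt) hC0
            _ ≤ δ := by
                rw [← mul_div_assoc, div_le_iff₀ (by positivity : (0:ℝ) < C + 1)]
                nlinarith
        have hunit1 : ∀ i : Fin n, ‖(α N).toEquiv ((a ∘ s) i)‖ ≤ 1 := fun i => by
          rw [(α N).isometric]; exact ha (s i)
        have h1 := hδ (fun i => (α N).toEquiv ((a ∘ s) i)) (b ∘ s) hunit1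
          (fun i => hb (s i)) hsum
        have h2 : φ.eval TQ (fun i => (α N).toEquiv ((a ∘ s) i)) = φ.eval TQ (a ∘ s) :=
          autInv (α N) φ (a ∘ s)
        rw [h2] at h1
        exact h1
      by_contra hne
      have hpos : 0 < |φ.eval TQ (a ∘ s) - φ.eval TQ (b ∘ s)| :=
        abs_pos.mpr (sub_ne_zero.mpr hne)
      have := key (|φ.eval TQ (a ∘ s) - φ.eval TQ (b ∘ s)| / 2) (by linarith)
      linarith
  obtain ⟨β, hβ⟩ := hhom a b ha hb hsame
  exact ⟨β, hβ⟩
end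
end

section
/- Suppose N ⊆ M are tracial von Neumann algebras with trace-preserving inclusion, N is existentially closed in M (i.e., there is an embedding j: M → N^𝒰 restricting to the diagonal embedding on N), and M is existentially closed in N^𝒰. Then the inclusion N ⊆ M is downward ∃₂: for every nonnegative formula of the form inf_x sup_y φ(a, x, y) with φ quantifier-free and parameters a from N, if its value in M is 0, then its value in N is 0. -/
noncomputable section

section AuxHelpers

open Filter

instance ballUnivNonempty {M : Type*} [NormedRing M] :
    Nonempty {y : M // y ∈ (Set.univ : Set M) ∧ ‖y‖ ≤ 1} :=
  ⟨⟨0, Set.mem_univ 0, by simp⟩⟩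

lemma TraceData.τ_zero {M : Type*} [NormedRing M] [StarRing M] [Algebra ℂ M]
    (T : TraceData M) : T.τ 0 = 0 := by
  have h := T.map_add 0 0
  rw [add_zero] at h
  exact (left_eq_add.mp h)

lemma Formula.eval_sup_def {M : Type*} [NormedRing M] [StarRing M] [Algebra ℂ M]
    (T : TraceData M) {n : ℕ} (φ : Formula (n + 1)) (v : Fin n → M) :
    (Formula.sup φ).eval T v =
      ⨆ x : {y : M // y ∈ (Set.univ : Set M) ∧ ‖y‖ ≤ 1}, φ.eval T (Fin.snoc v x.1) := rfl

lemma Formula.eval_inf_def {M : Type*} [NormedRing M] [StarRing M] [Algebra ℂ M]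
    (T : TraceData M) {n : ℕ} (φ : Formula (n + 1)) (v : Fin n → M) :
    (Formula.inf φ).eval T v =
      ⨅ x : {y : M // y ∈ (Set.univ : Set M) ∧ ‖y‖ ≤ 1}, φ.eval T (Fin.snoc v x.1) := rfl

lemma StarPoly.evalAt_map {N M : Type*} [NormedRing N] [StarRing N] [Algebra ℂ N]
    [NormedRing M] [StarRing M] [Algebra ℂ M] (f : N →⋆ₐ[ℂ] M) {n : ℕ}
    (p : StarPoly n) (v : Fin n → N) :
    f (p.evalAt v) = p.evalAt (fun i => f (v i)) := by
  induction p using FreeAlgebra.induction with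
  | grade0 r => simp [StarPoly.evalAt, AlgHom.commutes, AlgHomClass.commutes]
  | grade1 x =>
      cases x with
      | inl i => simp [StarPoly.evalAt, FreeAlgebra.lift_ι_apply]
      | inr i => simp [StarPoly.evalAt, FreeAlgebra.lift_ι_apply, map_star]
  | mul a b ha hb => simp only [StarPoly.evalAt, map_mul] at *; rw [ha, hb]
  | add a b ha hb => simp only [StarPoly.evalAt, map_add] at *; rw [ha, hb]

/-- Quantifier-free formulas are preserved by trace embeddings. -/
lemma qf_eval_emb {N M : Type*} [NormedRing N] [StarRing N] [Algebra ℂ N]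
    [NormedRing M] [StarRing M] [Algebra ℂ M] {TN : TraceData N} {TM : TraceData M}
    (f : TraceEmbedding TN TM) :
    ∀ {n : ℕ} (φ : Formula n), φ.IsQF → ∀ v : Fin n → N,
      φ.eval TM (fun i => f.toHom (v i)) = φ.eval TN v := by
  intro n φ
  induction φ with
  | re p =>
      intro _ v
      show (TM.τ (p.evalAt fun i => f.toHom (v i))).re = (TN.τ (p.evalAt v)).re
      rw [← StarPoly.evalAt_map f.toHom, f.trace_eq]
  | im p =>
      intro _ v
      show (TM.τ (p.evalAt fun i => f.toHom (v i))).im = (TN.τ (p.evalAt v)).im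
      rw [← StarPoly.evalAt_map f.toHom, f.trace_eq]
  | comb g hg ψ ih =>
      intro h v
      show g (fun i => (ψ i).eval TM fun i' => f.toHom (v i')) = g (fun i => (ψ i).eval TN v)
      congr 1
      funext i
      exact ih i (h i) v
  | sup φ ih => intro h; exact h.elim
  | inf φ ih => intro h; exact h.elim

lemma StarPoly.exists_bound {M : Type*} [NormedRing M] [StarRing M] [Algebra ℂ M]
    [NormedStarGroup M] {n : ℕ} (p : StarPoly n) (C : ℝ) (hC : 0 ≤ C) :
    ∃ B : ℝ, ∀ v : Fin n → M, (∀ i, ‖v i‖ ≤ C) → ‖p.evalAt v‖ ≤ B := by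
  induction p using FreeAlgebra.induction with
  | grade0 r =>
      refine ⟨‖algebraMap ℂ M r‖, fun v _ => ?_⟩
      simp [StarPoly.evalAt, AlgHom.commutes]
  | grade1 x =>
      refine ⟨C, fun v hv => ?_⟩
      cases x with
      | inl i => simpa [StarPoly.evalAt, FreeAlgebra.lift_ι_apply] using hv i
      | inr i =>
          simp only [StarPoly.evalAt, FreeAlgebra.lift_ι_apply, Sum.elim_inr]
          rw [norm_star]
          exact hv i
  | mul a b ha hb =>
      obtain ⟨B1, h1⟩ := ha
      obtain ⟨B2, h2⟩ := hb
      refine ⟨B1 * B2, fun v hv => ?_⟩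
      have e : StarPoly.evalAt (a * b) v = StarPoly.evalAt a v * StarPoly.evalAt b v := map_mul _ _ _
      rw [e]
      exact (norm_mul_le _ _).trans
        (mul_le_mul (h1 v hv) (h2 v hv) (norm_nonneg _) ((norm_nonneg _).trans (h1 v hv)))
  | add a b ha hb =>
      obtain ⟨B1, h1⟩ := ha
      obtain ⟨B2, h2⟩ := hb
      refine ⟨B1 + B2, fun v hv => ?_⟩
      have e : StarPoly.evalAt (a + b) v = StarPoly.evalAt a v + StarPoly.evalAt b v := map_add _ _ _
      rw [e]
      exact (norm_add_le _ _).trans (add_le_add (h1 v hv) (h2 v hv))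

lemma abs_ciSup_le {ι : Type*} [Nonempty ι] {f : ι → ℝ} {B : ℝ}
    (h : ∀ i, |f i| ≤ B) : |⨆ i, f i| ≤ B := by
  rw [abs_le]
  constructor
  · obtain ⟨i⟩ := (inferInstance : Nonempty ι)
    have hb : BddAbove (Set.range f) := ⟨B, by rintro _ ⟨i', rfl⟩; exact (abs_le.1 (h i')).2⟩
    exact (abs_le.1 (h i)).1.trans (le_ciSup hb i)
  · exact ciSup_le fun i => (abs_le.1 (h i)).2

lemma abs_ciInf_le {ι : Type*} [Nonempty ι] {f : ι → ℝ} {B : ℝ}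
    (h : ∀ i, |f i| ≤ B) : |⨅ i, f i| ≤ B := by
  rw [abs_le]
  constructor
  · exact le_ciInf fun i => (abs_le.1 (h i)).1
  · obtain ⟨i⟩ := (inferInstance : Nonempty ι)
    have hb : BddBelow (Set.range f) := ⟨-B, by rintro _ ⟨i', rfl⟩; exact (abs_le.1 (h i')).1⟩
    exact (ciInf_le hb i).trans (abs_le.1 (h i)).2

/-- Evaluations of a fixed formula are uniformly bounded on tuples from
a fixed operator-norm ball (in a normed star algebra). -/
lemma Formula.eval_bound {M : Type*} [NormedRing M] [StarRing M] [Algebra ℂ M]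
    [NormedStarGroup M] (T : TraceData M) :
    ∀ {n : ℕ} (φ : Formula n) (C : ℝ), 1 ≤ C →
      ∃ B : ℝ, ∀ v : Fin n → M, (∀ i, ‖v i‖ ≤ C) → |φ.eval T v| ≤ B := by
  intro n φ
  induction φ with
  | re p =>
      intro C hC
      obtain ⟨B, hB⟩ := StarPoly.exists_bound (M := M) p C (zero_le_one.trans hC)
      refine ⟨B, fun v hv => ?_⟩
      exact (Complex.abs_re_le_norm _).trans ((T.bounded _).trans (hB v hv))
  | im p =>
      intro C hC
      obtain ⟨B, hB⟩ := StarPoly.exists_bound (M := M) p C (zero_le_one.trans hC)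
      refine ⟨B, fun v hv => ?_⟩
      exact (Complex.abs_im_le_norm _).trans ((T.bounded _).trans (hB v hv))
  | comb g hg ψ ih =>
      intro C hC
      choose B hB using fun i => ih i C hC
      have hK : IsCompact (Set.univ.pi fun i => Set.Icc (-(B i)) (B i)) :=
        isCompact_univ_pi fun i => isCompact_Icc
      obtain ⟨D, hD⟩ := hK.exists_bound_of_continuousOn hg.continuousOn
      refine ⟨D, fun v hv => ?_⟩
      have hmem : (fun i => (ψ i).eval T v) ∈ Set.univ.pi fun i => Set.Icc (-(B i)) (B i) := by
        intro i _
        exact abs_le.1 (hB i v hv)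
      exact hD _ hmem
  | sup φ ih =>
      intro C hC
      obtain ⟨B, hB⟩ := ih C hC
      refine ⟨B, fun v hv => ?_⟩
      rw [Formula.eval_sup_def]
      refine abs_ciSup_le fun x => hB _ fun i => ?_
      refine Fin.lastCases ?_ (fun i' => ?_) i
      · rw [Fin.snoc_last]; exact x.2.2.trans hC
      · rw [Fin.snoc_castSucc]; exact hv i'
  | inf φ ih =>
      intro C hC
      obtain ⟨B, hB⟩ := ih C hC
      refine ⟨B, fun v hv => ?_⟩
      rw [Formula.eval_inf_def]
      refine abs_ciInf_le fun x => hB _ fun i => ?_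
      refine Fin.lastCases ?_ (fun i' => ?_) i
      · rw [Fin.snoc_last]; exact x.2.2.trans hC
      · rw [Fin.snoc_castSucc]; exact hv i'

/-- Łoś for constant sequences: the diagonal embedding into a tracial
ultrapower is elementary. -/
lemma los_const {M Q : Type*} [NormedRing M] [StarRing M] [Algebra ℂ M]
    [NormedStarGroup M] [NormedRing Q] [StarRing Q] [Algebra ℂ Q]
    {𝒰 : Ultrafilter ℕ} {TM : TraceData M} {TQ : TraceData Q} {π : BddSeq M → Q}
    (hπ : IsTracialUltrapower 𝒰 TM TQ π) {n : ℕ} (φ : Formula n) (v : Fin n → M) :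
    φ.eval TQ (fun i => π (constSeq (v i))) = φ.eval TM v := by
  have h := hπ.los n φ (fun i => constSeq (v i))
  exact tendsto_nhds_unique h tendsto_const_nhds

end AuxHelpers

section DistFormula

open Filter

/-- The `*`-polynomial `(x₁ - x₀)⋆ (x₁ - x₀)` in two variables. -/
def distP : StarPoly 2 :=
  (FreeAlgebra.ι ℂ (Sum.inr 1) - FreeAlgebra.ι ℂ (Sum.inr 0)) *
    (FreeAlgebra.ι ℂ (Sum.inl 1) - FreeAlgebra.ι ℂ (Sum.inl 0))

/-- The formula `inf_x ‖x - v₀‖₂²`, distance (squared) to the unit ball. -/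
def distF : Formula 1 := Formula.inf (Formula.re distP)

lemma distP_evalAt {M : Type*} [NormedRing M] [StarRing M] [Algebra ℂ M]
    (v : Fin 2 → M) : distP.evalAt v = star (v 1 - v 0) * (v 1 - v 0) := by
  simp [distP, StarPoly.evalAt, FreeAlgebra.lift_ι_apply, star_sub]

lemma distF_eval {M : Type*} [NormedRing M] [StarRing M] [Algebra ℂ M]
    (T : TraceData M) (u : M) :
    distF.eval T (fun _ => u) =
      ⨅ x : {y : M // y ∈ (Set.univ : Set M) ∧ ‖y‖ ≤ 1},
        (T.τ (star (x.1 - u) * (x.1 - u))).re := by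
  rw [distF, Formula.eval_inf_def]
  congr 1
  funext x
  show (T.τ (distP.evalAt (Fin.snoc (fun _ => u) x.1))).re = _
  have h0 : (Fin.snoc (fun _ => u) x.1 : Fin 2 → M) 0 = u := by
    have : (0 : Fin 2) = Fin.castSucc 0 := rfl
    rw [this, Fin.snoc_castSucc]
  have h1 : (Fin.snoc (fun _ => u) x.1 : Fin 2 → M) 1 = x.1 := by
    have : (1 : Fin 2) = Fin.last 1 := rfl
    rw [this, Fin.snoc_last]
  rw [distP_evalAt, h0, h1]

lemma distF_nonneg {M : Type*} [NormedRing M] [StarRing M] [Algebra ℂ M]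
    (T : TraceData M) (u : M) : 0 ≤ distF.eval T (fun _ => u) := by
  rw [distF_eval]
  exact le_ciInf fun x => T.re_nonneg _

lemma distF_le {M : Type*} [NormedRing M] [StarRing M] [Algebra ℂ M]
    (T : TraceData M) (u x : M) (hx : ‖x‖ ≤ 1) :
    distF.eval T (fun _ => u) ≤ (T.τ (star (x - u) * (x - u))).re := by
  rw [distF_eval]
  have hb : BddBelow (Set.range fun x' : {y : M // y ∈ (Set.univ : Set M) ∧ ‖y‖ ≤ 1} =>
      (T.τ (star (x'.1 - u) * (x'.1 - u))).re) :=
    ⟨0, by rintro _ ⟨x', rfl⟩; exact T.re_nonneg _⟩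
  exact ciInf_le hb ⟨x, Set.mem_univ x, hx⟩

/-- Every element of the unit ball of a tracial ultrapower is represented by a
sequence of elements of the unit ball. -/
lemma ball_rep {M Q : Type*} [NormedRing M] [StarRing M] [Algebra ℂ M]
    [NormedStarGroup M] [NormedRing Q] [StarRing Q] [Algebra ℂ Q]
    {𝒰 : Ultrafilter ℕ} (h𝒰 : (𝒰 : Filter ℕ) ≤ Filter.cofinite)
    {TM : TraceData M} {TQ : TraceData Q} {π : BddSeq M → Q}
    (hπ : IsTracialUltrapower 𝒰 TM TQ π) (q : Q) (hq : ‖q‖ ≤ 1) :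
    ∃ z : BddSeq M, (∀ k, ‖z.1 k‖ ≤ 1) ∧ π z = q := by
  obtain ⟨z₀, rfl⟩ := hπ.surjective q
  have hdQ : distF.eval TQ (fun _ => π z₀) = 0 := by
    refine le_antisymm ?_ (distF_nonneg TQ _)
    have := distF_le TQ (π z₀) (π z₀) hq
    simpa [TraceData.τ_zero] using this
  have hlos : Tendsto (fun k => distF.eval TM (fun _ => z₀.1 k)) (𝒰 : Filter ℕ) (nhds 0) := by
    have h : Tendsto (fun k => distF.eval TM (fun _ => z₀.1 k)) (𝒰 : Filter ℕ)
        (nhds (distF.eval TQ (fun _ => π z₀))) := hπ.los 1 distF (fun _ => z₀)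
    rwa [hdQ] at h
  have key : ∀ kk : ℕ, ∃ x : M, ‖x‖ ≤ 1 ∧
      (TM.τ (star (x - z₀.1 kk) * (x - z₀.1 kk))).re <
        distF.eval TM (fun _ => z₀.1 kk) + ((kk : ℝ) + 1)⁻¹ := by
    intro kk
    have hpos : (0 : ℝ) < ((kk : ℝ) + 1)⁻¹ := by positivity
    have hlt : distF.eval TM (fun _ => z₀.1 kk) <
        distF.eval TM (fun _ => z₀.1 kk) + ((kk : ℝ) + 1)⁻¹ := lt_add_of_pos_right _ hpos
    rw [distF_eval] at hlt
    obtain ⟨x, hx⟩ := exists_lt_of_ciInf_lt hlt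
    refine ⟨x.1, x.2.2, ?_⟩
    rw [distF_eval]
    exact hx
  choose x hx1 hx2 using key
  refine ⟨⟨x, 1, hx1⟩, hx1, ?_⟩
  apply (hπ.eq_iff _ _).2
  have h0le : ∀ kk, 0 ≤ (TM.τ (star (x kk - z₀.1 kk) * (x kk - z₀.1 kk))).re :=
    fun kk => TM.re_nonneg _
  have hinv : Tendsto (fun kk : ℕ => ((kk : ℝ) + 1)⁻¹) (𝒰 : Filter ℕ) (nhds 0) := by
    have h1 : Tendsto (fun kk : ℕ => ((kk : ℝ) + 1)⁻¹) Filter.atTop (nhds 0) := by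
      simpa [one_div] using tendsto_one_div_add_atTop_nhds_zero_nat (𝕜 := ℝ)
    exact h1.mono_left (h𝒰.trans (le_of_eq Nat.cofinite_eq_atTop))
  have hub : Tendsto (fun kk => distF.eval TM (fun _ => z₀.1 kk) + ((kk : ℝ) + 1)⁻¹)
      (𝒰 : Filter ℕ) (nhds 0) := by
    simpa using hlos.add hinv
  have hsq : Tendsto (fun kk => (TM.τ (star (x kk - z₀.1 kk) * (x kk - z₀.1 kk))).re)
      (𝒰 : Filter ℕ) (nhds 0) :=
    tendsto_of_tendsto_of_tendsto_of_le_of_le tendsto_const_nhds hub h0le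
      (fun kk => (hx2 kk).le)
  have : Tendsto (fun kk => TM.norm2 (x kk - z₀.1 kk)) (𝒰 : Filter ℕ)
      (nhds (Real.sqrt 0)) := hsq.sqrt
  simpa using this

/-- Evaluations of a formula on the unit ball of a tracial ultrapower, with
fixed ultrapower parameters, are uniformly bounded. -/
lemma up_ball_bound {M Q : Type*} [NormedRing M] [StarRing M] [Algebra ℂ M]
    [NormedStarGroup M] [NormedRing Q] [StarRing Q] [Algebra ℂ Q]
    {𝒰 : Ultrafilter ℕ} (h𝒰 : (𝒰 : Filter ℕ) ≤ Filter.cofinite)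
    {TM : TraceData M} {TQ : TraceData Q} {π : BddSeq M → Q}
    (hπ : IsTracialUltrapower 𝒰 TM TQ π) {n : ℕ} (φ : Formula (n + 1)) (v : Fin n → Q) :
    ∃ B : ℝ, ∀ x : Q, ‖x‖ ≤ 1 → |φ.eval TQ (Fin.snoc v x)| ≤ B := by
  choose y hy using fun i => hπ.surjective (v i)
  choose Cf hCf using fun i => (y i).2
  set C : ℝ := 1 + ∑ i, |Cf i| with hCdef
  have hsum : (0 : ℝ) ≤ ∑ i, |Cf i| := Finset.sum_nonneg fun i _ => abs_nonneg _
  have hC1 : (1 : ℝ) ≤ C := le_add_of_nonneg_right hsum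
  obtain ⟨B, hB⟩ := Formula.eval_bound TM φ C hC1
  refine ⟨B, fun x hx => ?_⟩
  obtain ⟨z, hz1, hz2⟩ := ball_rep h𝒰 hπ x hx
  have hlos := hπ.los (n + 1) φ (Fin.snoc y z)
  have heq : (fun i => π ((Fin.snoc y z : Fin (n + 1) → BddSeq M) i)) = Fin.snoc v x := by
    funext i
    refine Fin.lastCases (motive := fun i : Fin (n + 1) =>
      π ((Fin.snoc y z : Fin (n + 1) → BddSeq M) i) = (Fin.snoc v x : Fin (n + 1) → Q) i)
      ?_ (fun i' => ?_) i
    · simp only [Fin.snoc_last]; exact hz2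
    · simp only [Fin.snoc_castSucc]; exact hy i'
  rw [heq] at hlos
  refine le_of_tendsto' hlos.abs (fun kk => ?_)
  refine hB _ fun i => ?_
  refine Fin.lastCases (motive := fun i : Fin (n + 1) =>
    ‖((Fin.snoc y z : Fin (n + 1) → BddSeq M) i).1 kk‖ ≤ C) ?_ (fun i' => ?_) i
  · simp only [Fin.snoc_last]; exact (hz1 kk).trans hC1
  · simp only [Fin.snoc_castSucc]
    refine (hCf i' kk).trans ((le_abs_self _).trans ?_)
    refine le_trans ?_ (le_add_of_nonneg_left zero_le_one)
    exact Finset.single_le_sum (fun i'' _ => abs_nonneg (Cf i'')) (Finset.mem_univ i')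

end DistFormula

section MainLemmas

open Filter

variable {M QN QM : Type*}
  [NormedRing M] [StarRing M] [Algebra ℂ M] [NormedStarGroup M]
  [NormedRing QN] [StarRing QN] [Algebra ℂ QN]
  [NormedRing QM] [StarRing QM] [Algebra ℂ QM]

/-- `sup`-quantifier-free formulas can only increase along a trace embedding
into a tracial ultrapower. -/
lemma supQF_le {TM : TraceData M} {TQN : TraceData QN} {TQM : TraceData QM}
    {𝒰 : Ultrafilter ℕ} (h𝒰 : (𝒰 : Filter ℕ) ≤ Filter.cofinite)
    {πM : BddSeq M → QM} (hπM : IsTracialUltrapower 𝒰 TM TQM πM)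
    (k : TraceEmbedding TQN TQM) :
    ∀ {n : ℕ} (ψ : Formula n), ψ.IsSupQF → ∀ v : Fin n → QN,
      ψ.eval TQN v ≤ ψ.eval TQM (fun i => k.toHom (v i)) := by
  intro n ψ
  induction ψ with
  | re p => intro h v; exact (qf_eval_emb k _ h v).ge
  | im p => intro h v; exact (qf_eval_emb k _ h v).ge
  | comb g hg ψs ih => intro h v; exact (qf_eval_emb k _ h v).ge
  | inf ψ' ih => intro h; exact h.elim
  | @sup n ψ' ih =>
      intro h v
      rw [Formula.eval_sup_def, Formula.eval_sup_def]
      refine ciSup_le fun x => ?_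
      obtain ⟨B, hB⟩ := up_ball_bound h𝒰 hπM ψ' (fun i => k.toHom (v i))
      have hbdd : BddAbove (Set.range fun x2 : {y : QM // y ∈ (Set.univ : Set QM) ∧ ‖y‖ ≤ 1} =>
          ψ'.eval TQM (Fin.snoc (fun i => k.toHom (v i)) x2.1)) := by
        refine ⟨B, ?_⟩
        rintro _ ⟨x2, rfl⟩
        exact (abs_le.1 (hB x2.1 x2.2.2)).2
      have hmem : k.toHom x.1 ∈ (Set.univ : Set QM) ∧ ‖k.toHom x.1‖ ≤ 1 :=
        ⟨Set.mem_univ _, by rw [k.isometric]; exact x.2.2⟩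
      have hle := le_ciSup hbdd (⟨k.toHom x.1, hmem⟩ :
        {y : QM // y ∈ (Set.univ : Set QM) ∧ ‖y‖ ≤ 1})
      refine (ih h (Fin.snoc v x.1)).trans ?_
      have hcomp : (fun i => k.toHom ((Fin.snoc v x.1 : Fin (n + 1) → QN) i)) =
          Fin.snoc (fun i => k.toHom (v i)) (k.toHom x.1) := by
        funext i
        refine Fin.lastCases (motive := fun i : Fin (n + 1) =>
          k.toHom ((Fin.snoc v x.1 : Fin (n + 1) → QN) i) =
          (Fin.snoc (fun i' => k.toHom (v i')) (k.toHom x.1) : Fin (n + 1) → QM) i)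
          ?_ (fun i' => ?_) i
        · simp only [Fin.snoc_last]
        · simp only [Fin.snoc_castSucc]
      rw [hcomp]
      exact hle

variable {N : Type*} [NormedRing N] [StarRing N] [Algebra ℂ N] [NormedStarGroup N]

/-- The key lemma: for `∃₂`-formulas, evaluation along `j : M → N^𝒰` is
dominated by evaluation in `M`. -/
lemma infSupQF_key {TN : TraceData N} {TM : TraceData M} {TQN : TraceData QN}
    {TQM : TraceData QM} {𝒰 : Ultrafilter ℕ} (h𝒰 : (𝒰 : Filter ℕ) ≤ Filter.cofinite)
    {πN : BddSeq N → QN} (hπN : IsTracialUltrapower 𝒰 TN TQN πN)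
    {πM : BddSeq M → QM} (hπM : IsTracialUltrapower 𝒰 TM TQM πM)
    (j : TraceEmbedding TM TQN) (k : TraceEmbedding TQN TQM)
    (hk : ∀ x : M, k.toHom (j.toHom x) = πM (constSeq x)) :
    ∀ {n : ℕ} (ψ : Formula n), ψ.IsInfSupQF → ∀ w : Fin n → M,
      ψ.eval TQN (fun i => j.toHom (w i)) ≤ ψ.eval TM w := by
  have base : ∀ {n : ℕ} (ψ : Formula n), ψ.IsSupQF → ∀ w : Fin n → M,
      ψ.eval TQN (fun i => j.toHom (w i)) ≤ ψ.eval TM w := by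
    intro n ψ h w
    calc ψ.eval TQN (fun i => j.toHom (w i))
        ≤ ψ.eval TQM (fun i => k.toHom (j.toHom (w i))) := supQF_le h𝒰 hπM k ψ h _
      _ = ψ.eval TQM (fun i => πM (constSeq (w i))) := by simp only [hk]
      _ = ψ.eval TM w := los_const hπM ψ w
  intro n ψ
  induction ψ with
  | re p => intro h w; exact base _ h w
  | im p => intro h w; exact base _ h w
  | comb g hg ψs ih => intro h w; exact base _ h w
  | sup ψ' ih => intro h w; exact base _ h w
  | @inf n ψ' ih =>
      intro h w
      rw [Formula.eval_inf_def, Formula.eval_inf_def]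
      obtain ⟨B, hB⟩ := up_ball_bound h𝒰 hπN ψ' (fun i => j.toHom (w i))
      have hbdd : BddBelow (Set.range fun x : {y : QN // y ∈ (Set.univ : Set QN) ∧ ‖y‖ ≤ 1} =>
          ψ'.eval TQN (Fin.snoc (fun i => j.toHom (w i)) x.1)) := by
        refine ⟨-B, ?_⟩
        rintro _ ⟨x, rfl⟩
        exact (abs_le.1 (hB x.1 x.2.2)).1
      refine le_of_forall_pos_le_add ?_
      intro ε hε
      have hlt : (⨅ x : {y : M // y ∈ (Set.univ : Set M) ∧ ‖y‖ ≤ 1},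
          ψ'.eval TM (Fin.snoc w x.1)) <
          (⨅ x : {y : M // y ∈ (Set.univ : Set M) ∧ ‖y‖ ≤ 1},
          ψ'.eval TM (Fin.snoc w x.1)) + ε := lt_add_of_pos_right _ hε
      obtain ⟨x₀, hx₀⟩ := exists_lt_of_ciInf_lt hlt
      have hmem : j.toHom x₀.1 ∈ (Set.univ : Set QN) ∧ ‖j.toHom x₀.1‖ ≤ 1 :=
        ⟨Set.mem_univ _, by rw [j.isometric]; exact x₀.2.2⟩
      have h1 := ciInf_le hbdd (⟨j.toHom x₀.1, hmem⟩ :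
        {y : QN // y ∈ (Set.univ : Set QN) ∧ ‖y‖ ≤ 1})
      have hcomp : (fun i => j.toHom ((Fin.snoc w x₀.1 : Fin (n + 1) → M) i)) =
          Fin.snoc (fun i => j.toHom (w i)) (j.toHom x₀.1) := by
        funext i
        refine Fin.lastCases (motive := fun i : Fin (n + 1) =>
          j.toHom ((Fin.snoc w x₀.1 : Fin (n + 1) → M) i) =
          (Fin.snoc (fun i' => j.toHom (w i')) (j.toHom x₀.1) : Fin (n + 1) → QN) i)
          ?_ (fun i' => ?_) i
        · simp only [Fin.snoc_last]
        · simp only [Fin.snoc_castSucc]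
      have h2 := ih h (Fin.snoc w x₀.1)
      rw [hcomp] at h2
      exact h1.trans (h2.trans hx₀.le)

end MainLemmas

/-- If `N ⊆ M` is a trace-preserving inclusion of tracial von Neumann
algebras, `N` is existentially closed in `M` (there is an embedding
`j : M → N^𝒰` restricting to the diagonal embedding on `N`), and `M` is
existentially closed in `N^𝒰` (there is an embedding `k : N^𝒰 → M^𝒰`
restricting, along `j`, to the diagonal embedding on `M`), then the inclusion
`N ⊆ M` is downward `∃₂`. -/
theorem stmt_12 {N M QN QM : Type*}
    [NormedRing N] [StarRing N] [Algebra ℂ N] [NormedStarGroup N]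
    [NormedRing M] [StarRing M] [Algebra ℂ M] [NormedStarGroup M]
    [NormedRing QN] [StarRing QN] [Algebra ℂ QN]
    [NormedRing QM] [StarRing QM] [Algebra ℂ QM]
    (TN : TraceData N) (TM : TraceData M) (TQN : TraceData QN) (TQM : TraceData QM)
    (ι : TraceEmbedding TN TM)
    (𝒰 : Ultrafilter ℕ) (h𝒰 : (𝒰 : Filter ℕ) ≤ Filter.cofinite)
    (πN : BddSeq N → QN) (hπN : IsTracialUltrapower 𝒰 TN TQN πN)
    (πM : BddSeq M → QM) (hπM : IsTracialUltrapower 𝒰 TM TQM πM)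
    (j : TraceEmbedding TM TQN)
    (hj : ∀ x : N, j.toHom (ι.toHom x) = πN (constSeq x))
    (k : TraceEmbedding TQN TQM)
    (hk : ∀ x : M, k.toHom (j.toHom x) = πM (constSeq x)) :
    ι.DownwardE2 := by
  intro n φ hφ hN hM a h0
  have h1 : φ.eval TN a = φ.eval TQN (fun i => j.toHom (ι.toHom (a i))) := by
    have hdiag : (fun i => j.toHom (ι.toHom (a i))) = fun i => πN (constSeq (a i)) :=
      funext fun i => hj (a i)
    rw [hdiag, los_const hπN φ a]
  have h2 : φ.eval TQN (fun i => j.toHom (ι.toHom (a i))) ≤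
      φ.eval TM (fun i => ι.toHom (a i)) :=
    infSupQF_key h𝒰 hπN hπM j k hk φ hφ (fun i => ι.toHom (a i))
  refine le_antisymm ?_ (hN a)
  rw [h1]
  exact h2.trans h0.le
end
end
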